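/- arXiv:1212.5796 — 4 statements merged into one kernel-verified Lean document; each statement's English description precedes it below -/
import Mathlib

section
/- Typical bounded differences inequality for 0-1 variables. Let X=(X_1,...,X_N) be a family of independent random variables with X_k ∈ {0,1} and p_k = P(X_k = 1), let Γ ⊆ {0,1}^N be an event, and assume f satisfies the typical Lipschitz condition (TL) relative to Γ with coefficients c_k ≤ d_k. Then for any real numbers (γ_k)_{k∈[N]} with γ_k ∈ (0,1] there exists an event B = B(Γ,(γ_k)) such that P(B) ≤ Σ_{k∈[N]} γ_k^{-1}·P(X ∉ Γ) and the complement of B is contained in Γ, and, setting μ = E f(X), e_k = γ_k(d_k − c_k) and C = max_{k∈[N]} (c_k + e_k), for every t ≥ 0 one has P(f(X) ≥ μ + t and not B) ≤ exp(−t² / (2 Σ_{k∈[N]} (1−p_k)p_k(c_k + e_k)² + 2Ct/3)). -/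
/-!
Let `χ` be the indicator of `Γᶜ`, and call `x` bad at step `k` when the conditional probability
`E[χ | x₀, …, x_{k-1}]` is at least `γ k`; `B` is `Γᶜ` together with every point that is bad at
some step. Markov's inequality for this conditional probability gives
`P(Γᶜ ∪ {bad at k}) ≤ (γ k)⁻¹ P(Γᶜ)`. Away from the points bad at `k`, averaging the typical
Lipschitz condition over the coordinates after `k` bounds the `k`-th increment of the Doob
martingale of `f` by `c k + γ k (d k - c k)`. The exponential martingale, switched off from the
first bad step on, then obeys Bernstein's two-point moment generating function bound at every
step, and optimising the Chernoff bound over the exponent gives the tail estimate.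
-/
open Real Set Function MeasureTheory

theorem exp_le_one_add_add_three_mul_sq_div {x : ℝ} (hx : x < 3) :
    exp x ≤ 1 + x + 3 * x ^ 2 / (2 * (3 - x)) := by
  -- `h` has derivative `exp (-y) * y ^ 3 / (2 * (3 - y) ^ 2)`, of the sign of `y`,
  -- so `h` is minimal at `0`, where it equals `1`.
  set h : ℝ → ℝ := fun y => (1 + y + 3 * y ^ 2 / (2 * (3 - y))) * exp (-y) with h_def
  have hderiv : ∀ y < 3, HasDerivAt h (exp (-y) * y ^ 3 / (2 * (3 - y) ^ 2)) y := by
    intro y hy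
    have h3 : 2 * (3 - y) ≠ 0 := by linarith
    refine ((((hasDerivAt_id y).const_add 1).add
      (((hasDerivAt_pow 2 y).const_mul 3).div
        (((hasDerivAt_id y).const_sub 3).const_mul 2) h3)).mul
      (hasDerivAt_neg y).exp).congr_deriv ?_
    have : 3 - y ≠ 0 := by linarith
    simp only [id, Nat.cast_ofNat, Pi.add_apply, Pi.div_apply]
    field_simp
    ring
  have hcont : ∀ a b, b < 3 → ContinuousOn h (Icc a b) := fun a b hb y hy =>
    (hderiv y (hy.2.trans_lt hb)).continuousAt.continuousWithinAt
  have hderiv' : ∀ a b, b < 3 → ∀ y ∈ interior (Icc a b),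
      HasDerivWithinAt h (exp (-y) * y ^ 3 / (2 * (3 - y) ^ 2)) (interior (Icc a b)) y := by
    intro a b hb y hy
    rw [interior_Icc] at hy
    exact (hderiv y (hy.2.trans hb)).hasDerivWithinAt
  have h0 : h 0 = 1 := by simp [h_def]
  have hx1 : 1 ≤ h x := by
    rcases le_total x 0 with hx0 | hx0
    · refine h0 ▸ antitoneOn_of_hasDerivWithinAt_nonpos (convex_Icc x 0) (hcont x 0 (by norm_num))
        (hderiv' x 0 (by norm_num)) (fun y hy => ?_) ⟨le_rfl, hx0⟩ ⟨hx0, le_rfl⟩ hx0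
      rw [interior_Icc] at hy
      have hy3 : y ^ 3 ≤ 0 := Odd.pow_nonpos (by decide) hy.2.le
      exact div_nonpos_of_nonpos_of_nonneg (mul_nonpos_of_nonneg_of_nonpos (exp_pos _).le hy3)
        (by positivity)
    · refine h0 ▸ monotoneOn_of_hasDerivWithinAt_nonneg (convex_Icc 0 x) (hcont 0 x hx)
        (hderiv' 0 x hx) (fun y hy => ?_) ⟨le_rfl, hx0⟩ ⟨hx0, le_rfl⟩ hx0
      rw [interior_Icc] at hy
      have := hy.1.le
      positivity
  calc exp x = 1 * exp x := (one_mul _).symm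
    _ ≤ h x * exp x := by gcongr
    _ = 1 + x + 3 * x ^ 2 / (2 * (3 - x)) := by simp [h_def, mul_assoc, ← exp_add]

theorem exp_le_one_add_add_sq_div_of_le {x u : ℝ} (hxu : x ≤ u) (hu : u < 3) :
    exp x ≤ 1 + x + x ^ 2 / (2 * (1 - u / 3)) := by
  refine (exp_le_one_add_add_three_mul_sq_div (hxu.trans_lt hu)).trans ?_
  have : 3 * x ^ 2 / (2 * (3 - x)) ≤ x ^ 2 / (2 * (1 - u / 3)) := by
    rw [div_le_div_iff₀ (by linarith) (by linarith)]
    nlinarith [sq_nonneg x]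
  linarith

/-- The left side is the moment generating function of the centred variable equal to
`(1 - p) Δ` with probability `p` and to `-p Δ` otherwise. -/
theorem two_point_mgf_le {p Δ a C l : ℝ} (hp : p ∈ Icc 0 1) (hΔ : |Δ| ≤ a) (haC : a ≤ C)
    (hl : 0 ≤ l) (hlC : l * C < 3) :
    p * exp (l * ((1 - p) * Δ)) + (1 - p) * exp (-(l * (p * Δ))) ≤
      exp (l ^ 2 * ((1 - p) * p * a ^ 2) / (2 * (1 - l * C / 3))) := by
  obtain ⟨hp₀, hp₁⟩ := hp
  obtain ⟨hΔ₁, hΔ₂⟩ := abs_le.1 hΔ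
  have hD : 0 < 2 * (1 - l * C / 3) := by linarith
  have hla : l * a ≤ l * C := mul_le_mul_of_nonneg_left haC hl
  have ha : 0 ≤ a := (abs_nonneg Δ).trans hΔ
  have e₁ := exp_le_one_add_add_sq_div_of_le (x := l * ((1 - p) * Δ)) (u := l * C)
    ((mul_le_mul_of_nonneg_left (by nlinarith) hl).trans hla) hlC
  have e₂ := exp_le_one_add_add_sq_div_of_le (x := -(l * (p * Δ))) (u := l * C)
    (by nlinarith [mul_le_mul_of_nonneg_left (show -(p * Δ) ≤ a by nlinarith) hl]) hlC
  have hvar : l ^ 2 * ((1 - p) * p * Δ ^ 2) ≤ l ^ 2 * ((1 - p) * p * a ^ 2) :=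
    mul_le_mul_of_nonneg_left (mul_le_mul_of_nonneg_left (sq_le_sq' hΔ₁ hΔ₂)
      (mul_nonneg (sub_nonneg.2 hp₁) hp₀)) (sq_nonneg l)
  calc p * exp (l * ((1 - p) * Δ)) + (1 - p) * exp (-(l * (p * Δ)))
      ≤ p * (1 + l * ((1 - p) * Δ) + (l * ((1 - p) * Δ)) ^ 2 / (2 * (1 - l * C / 3))) +
        (1 - p) * (1 + -(l * (p * Δ)) + (-(l * (p * Δ))) ^ 2 / (2 * (1 - l * C / 3))) := by
        gcongr
    _ = 1 + l ^ 2 * ((1 - p) * p * Δ ^ 2) / (2 * (1 - l * C / 3)) := by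
        field_simp
        ring
    _ ≤ 1 + l ^ 2 * ((1 - p) * p * a ^ 2) / (2 * (1 - l * C / 3)) := by gcongr
    _ ≤ _ := by linarith [add_one_le_exp (l ^ 2 * ((1 - p) * p * a ^ 2) / (2 * (1 - l * C / 3)))]

theorem le_exp_bernstein_of_forall_le {q V C t : ℝ} (hV : 0 ≤ V) (hC : 0 ≤ C) (ht : 0 ≤ t)
    (h : ∀ l, 0 ≤ l → l * C < 3 → q ≤ exp (-(l * t) + l ^ 2 * V / (2 * (1 - l * C / 3)))) :
    q ≤ exp (-t ^ 2 / (2 * V + 2 * C * t / 3)) := by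
  rcases hV.eq_or_lt with rfl | hV
  · rcases (mul_nonneg hC ht).eq_or_lt with hCt | hCt
    · simpa [← hCt, mul_assoc] using h 0 le_rfl (by norm_num)
    · have hC : 0 < C := pos_of_mul_pos_left hCt ht
      have ht : 0 < t := pos_of_mul_pos_right hCt hC.le
      convert h (3 / (2 * C)) (by positivity) (by field_simp; norm_num) using 2
      field_simp
      ring
  · -- the optimal choice `l = t / (V + C t / 3)`
    have hden : 0 < V + C * t / 3 := by positivity
    convert h (t / (V + C * t / 3)) (by positivity) ?_ using 2
    · field_simp
      ring
    · rw [div_mul_eq_mul_div, div_lt_iff₀ hden]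
      nlinarith

namespace BoolCube

variable {N : ℕ} (p : Fin N → ℝ)

def coordWeight (k : Fin N) (b : Bool) : ℝ := if b then p k else 1 - p k

def weight (x : Fin N → Bool) : ℝ := ∏ k, coordWeight p k (x k)

def expect (g : (Fin N → Bool) → ℝ) : ℝ := ∑ x, weight p x * g x

def avgAt (k : Fin N) (g : (Fin N → Bool) → ℝ) (x : Fin N → Bool) : ℝ :=
  ∑ b, coordWeight p k b * g (update x k b)

/-- `condAvg p j g` is the conditional expectation of `g` given the coordinates `x i` with
`i < j`: the coordinates `j, j + 1, …, N - 1` are averaged out one at a time. -/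
def condAvg (j : ℕ) (g : (Fin N → Bool) → ℝ) : (Fin N → Bool) → ℝ :=
  if h : j < N then avgAt p ⟨j, h⟩ (condAvg (j + 1) g) else g
termination_by N - j

theorem sum_coordWeight (k : Fin N) : ∑ b, coordWeight p k b = 1 := by
  simp [coordWeight]

theorem coordWeight_nonneg (hp : ∀ k, p k ∈ Icc 0 1) (k : Fin N) (b : Bool) :
    0 ≤ coordWeight p k b := by
  cases b <;> simp [coordWeight, (hp k).1, (hp k).2]

theorem sum_weight : ∑ x, weight p x = 1 := by
  simp only [weight, ← Fintype.prod_sum (fun k b => coordWeight p k b), sum_coordWeight,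
    Finset.prod_const_one]

theorem weight_nonneg (hp : ∀ k, p k ∈ Icc 0 1) (x : Fin N → Bool) : 0 ≤ weight p x :=
  Finset.prod_nonneg fun k _ => coordWeight_nonneg p hp k (x k)

theorem weight_update (x : Fin N → Bool) (k : Fin N) (b : Bool) :
    weight p (update x k b) =
      coordWeight p k b * ∏ i ∈ Finset.univ.erase k, coordWeight p i (x i) := by
  rw [weight, ← Finset.mul_prod_erase _ _ (Finset.mem_univ k), update_self]
  congr 1
  exact Finset.prod_congr rfl fun i hi => by rw [update_of_ne (Finset.ne_of_mem_erase hi)]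

theorem avgAt_update (k : Fin N) (g : (Fin N → Bool) → ℝ) (x : Fin N → Bool) (b : Bool) :
    avgAt p k g (update x k b) = avgAt p k g x := by
  simp [avgAt]

theorem avgAt_avgAt (k : Fin N) (g : (Fin N → Bool) → ℝ) :
    avgAt p k (avgAt p k g) = avgAt p k g := by
  ext x
  show ∑ b, coordWeight p k b * avgAt p k g (update x k b) = _
  simp only [avgAt_update, ← Finset.sum_mul, sum_coordWeight, one_mul]

theorem avgAt_mul_left {k : Fin N} {φ : (Fin N → Bool) → ℝ} (hφ : ∀ x b, φ (update x k b) = φ x)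
    (g : (Fin N → Bool) → ℝ) (x : Fin N → Bool) :
    avgAt p k (fun y => φ y * g y) x = φ x * avgAt p k g x := by
  simp only [avgAt, hφ, Finset.mul_sum]
  exact Finset.sum_congr rfl fun b _ => by ring

theorem avgAt_mono (hp : ∀ k, p k ∈ Icc 0 1) {k : Fin N} {g h : (Fin N → Bool) → ℝ}
    (hgh : ∀ x, g x ≤ h x) (x : Fin N → Bool) : avgAt p k g x ≤ avgAt p k h x :=
  Finset.sum_le_sum fun b _ => mul_le_mul_of_nonneg_left (hgh _) (coordWeight_nonneg p hp k b)

theorem condAvg_of_lt {j : ℕ} (hj : j < N) (g : (Fin N → Bool) → ℝ) :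
    condAvg p j g = avgAt p ⟨j, hj⟩ (condAvg p (j + 1) g) := by
  rw [condAvg, dif_pos hj]

theorem condAvg_of_le {j : ℕ} (hj : N ≤ j) (g : (Fin N → Bool) → ℝ) : condAvg p j g = g := by
  rw [condAvg, dif_neg hj.not_gt]

theorem condAvg_const (j : ℕ) (a : ℝ) : condAvg p j (fun _ => a) = fun _ => a := by
  by_cases hj : j < N
  · rw [condAvg_of_lt p hj, condAvg_const (j + 1) a]
    ext x
    simp only [avgAt, ← Finset.sum_mul, sum_coordWeight, one_mul]
  · rw [condAvg_of_le p (not_lt.1 hj)]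
termination_by N - j

theorem condAvg_add (j : ℕ) (g h : (Fin N → Bool) → ℝ) :
    condAvg p j (fun y => g y + h y) = fun x => condAvg p j g x + condAvg p j h x := by
  by_cases hj : j < N
  · simp only [condAvg_of_lt p hj, condAvg_add (j + 1) g h]
    ext x
    simp [avgAt, mul_add, Finset.sum_add_distrib]
  · simp only [condAvg_of_le p (not_lt.1 hj)]
termination_by N - j

theorem condAvg_const_mul (j : ℕ) (a : ℝ) (g : (Fin N → Bool) → ℝ) :
    condAvg p j (fun y => a * g y) = fun x => a * condAvg p j g x := by
  by_cases hj : j < N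
  · simp only [condAvg_of_lt p hj, condAvg_const_mul (j + 1) a g]
    ext x
    simp only [avgAt, Finset.mul_sum]
    exact Finset.sum_congr rfl fun b _ => by ring
  · simp only [condAvg_of_le p (not_lt.1 hj)]
termination_by N - j

theorem condAvg_sub (j : ℕ) (g h : (Fin N → Bool) → ℝ) :
    condAvg p j (fun y => g y - h y) = fun x => condAvg p j g x - condAvg p j h x := by
  rw [show (fun y => g y - h y) = fun y => g y + -1 * h y from funext fun y => by ring,
    condAvg_add, condAvg_const_mul]
  ext x
  ring

theorem condAvg_mono (hp : ∀ k, p k ∈ Icc 0 1) (j : ℕ) {g h : (Fin N → Bool) → ℝ}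
    (hgh : ∀ x, g x ≤ h x) (x : Fin N → Bool) : condAvg p j g x ≤ condAvg p j h x := by
  by_cases hj : j < N
  · rw [condAvg_of_lt p hj, condAvg_of_lt p hj]
    exact avgAt_mono p hp (condAvg_mono hp (j + 1) hgh) x
  · rw [condAvg_of_le p (not_lt.1 hj), condAvg_of_le p (not_lt.1 hj)]
    exact hgh x
termination_by N - j

theorem abs_condAvg_le (hp : ∀ k, p k ∈ Icc 0 1) (j : ℕ) {g b : (Fin N → Bool) → ℝ}
    (hgb : ∀ x, |g x| ≤ b x) (x : Fin N → Bool) : |condAvg p j g x| ≤ condAvg p j b x := by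
  have hneg := condAvg_mono p hp j (g := fun y => -1 * b y) (h := g)
    (fun y => by linarith [neg_abs_le (g y), hgb y]) x
  rw [condAvg_const_mul] at hneg
  exact abs_le.2 ⟨by linarith, condAvg_mono p hp j (fun y => (le_abs_self _).trans (hgb y)) x⟩

theorem condAvg_update_of_le {j : ℕ} {k : Fin N} (hk : j ≤ k) (g : (Fin N → Bool) → ℝ)
    (x : Fin N → Bool) (b : Bool) : condAvg p j g (update x k b) = condAvg p j g x := by
  have hj : j < N := hk.trans_lt k.isLt
  rw [condAvg_of_lt p hj]
  rcases hk.eq_or_lt with rfl | hk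
  · exact avgAt_update p _ _ x b
  · have hne : (⟨j, hj⟩ : Fin N) ≠ k := Fin.ne_of_val_ne hk.ne
    simp only [avgAt]
    refine Finset.sum_congr rfl fun b' _ => ?_
    rw [update_comm hne.symm, condAvg_update_of_le hk]
termination_by N - j

theorem condAvg_update_of_lt {j : ℕ} {k : Fin N} (hk : k < j) (g : (Fin N → Bool) → ℝ)
    (x : Fin N → Bool) (b : Bool) :
    condAvg p j (fun y => g (update y k b)) x = condAvg p j g (update x k b) := by
  by_cases hj : j < N
  · have hne : (⟨j, hj⟩ : Fin N) ≠ k := Fin.ne_of_val_ne hk.ne'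
    simp only [condAvg_of_lt p hj, avgAt]
    refine Finset.sum_congr rfl fun b' _ => ?_
    rw [condAvg_update_of_lt (hk.trans j.lt_succ_self), update_comm hne]
  · rw [condAvg_of_le p (not_lt.1 hj), condAvg_of_le p (not_lt.1 hj)]
termination_by N - j

theorem condAvg_congr (j : ℕ) (g : (Fin N → Bool) → ℝ) {x y : Fin N → Bool}
    (hxy : ∀ i : Fin N, (i : ℕ) < j → x i = y i) : condAvg p j g x = condAvg p j g y := by
  by_cases hj : j < N
  · simp only [condAvg_of_lt p hj, avgAt]
    refine Finset.sum_congr rfl fun b _ => congrArg _ (condAvg_congr (j + 1) g fun i hi => ?_)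
    by_cases hij : i = ⟨j, hj⟩
    · simp [hij]
    · rw [update_of_ne hij, update_of_ne hij]
      exact hxy i (lt_of_le_of_ne (Nat.lt_succ_iff.1 hi) (Fin.val_ne_of_ne hij))
  · rw [condAvg_of_le p (not_lt.1 hj)]
    exact congrArg g (funext fun i => hxy i (i.isLt.trans_le (not_lt.1 hj)))
termination_by N - j

theorem condAvg_mul_left {j : ℕ} {φ : (Fin N → Bool) → ℝ}
    (hφ : ∀ x (k : Fin N) b, j ≤ k → φ (update x k b) = φ x) (g : (Fin N → Bool) → ℝ) :
    condAvg p j (fun y => φ y * g y) = fun x => φ x * condAvg p j g x := by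
  by_cases hj : j < N
  · rw [condAvg_of_lt p hj, condAvg_of_lt p hj,
      condAvg_mul_left (fun x k b hk => hφ x k b (j.le_succ.trans hk))]
    ext x
    exact avgAt_mul_left p (fun x b => hφ x _ b le_rfl) _ x
  · rw [condAvg_of_le p (not_lt.1 hj), condAvg_of_le p (not_lt.1 hj)]
termination_by N - j

theorem expect_add (g h : (Fin N → Bool) → ℝ) :
    expect p (fun x => g x + h x) = expect p g + expect p h := by
  simp [expect, mul_add, Finset.sum_add_distrib]

theorem expect_const_mul (a : ℝ) (g : (Fin N → Bool) → ℝ) :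
    expect p (fun x => a * g x) = a * expect p g := by
  simp only [expect, Finset.mul_sum]
  exact Finset.sum_congr rfl fun x _ => by ring

theorem expect_const (a : ℝ) : expect p (fun _ => a) = a := by
  simp [expect, ← Finset.sum_mul, sum_weight]

theorem expect_mono (hp : ∀ k, p k ∈ Icc 0 1) {g h : (Fin N → Bool) → ℝ} (hgh : ∀ x, g x ≤ h x) :
    expect p g ≤ expect p h :=
  Finset.sum_le_sum fun x _ => mul_le_mul_of_nonneg_left (hgh x) (weight_nonneg p hp x)

theorem sum_sum_update (k : Fin N) (G : (Fin N → Bool) → ℝ) :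
    ∑ x, ∑ b, G (update x k b) = 2 * ∑ x, G x := by
  have hflip : Involutive fun x : Fin N → Bool => update x k (!x k) := fun x => by simp
  have hsum : ∑ x, G (update x k (!x k)) = ∑ x, G x := Equiv.sum_comp (hflip.toPerm _) G
  calc ∑ x, ∑ b, G (update x k b) = ∑ x, (G x + G (update x k (!x k))) := by
        refine Finset.sum_congr rfl fun x _ => ?_
        rw [Fintype.sum_bool]
        cases hx : x k <;> simp only [Bool.not_false, Bool.not_true] <;> rw [← hx, update_eq_self]
        exact add_comm _ _
    _ = 2 * ∑ x, G x := by rw [Finset.sum_add_distrib, hsum, two_mul]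

theorem expect_avgAt (k : Fin N) (g : (Fin N → Bool) → ℝ) :
    expect p (avgAt p k g) = expect p g := by
  set w' : (Fin N → Bool) → ℝ := fun x => ∏ i ∈ Finset.univ.erase k, coordWeight p i (x i)
  have hw' : ∀ x b, w' (update x k b) = w' x := fun x b =>
    Finset.prod_congr rfl fun i hi => by rw [update_of_ne (Finset.ne_of_mem_erase hi)]
  have key : ∀ g : (Fin N → Bool) → ℝ, 2 * expect p g = ∑ x, w' x * avgAt p k g x := by
    intro g
    rw [expect, ← sum_sum_update k]
    refine Finset.sum_congr rfl fun x _ => ?_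
    simp only [weight_update, avgAt, Finset.mul_sum]
    exact Finset.sum_congr rfl fun b _ => by ring
  have := key (avgAt p k g)
  rw [avgAt_avgAt, ← key] at this
  linarith

theorem expect_condAvg (j : ℕ) (g : (Fin N → Bool) → ℝ) :
    expect p (condAvg p j g) = expect p g := by
  by_cases hj : j < N
  · rw [condAvg_of_lt p hj, expect_avgAt, expect_condAvg (j + 1)]
  · rw [condAvg_of_le p (not_lt.1 hj)]
termination_by N - j

theorem expect_mul_condAvg {j : ℕ} {φ : (Fin N → Bool) → ℝ}
    (hφ : ∀ x (k : Fin N) b, j ≤ k → φ (update x k b) = φ x) (g : (Fin N → Bool) → ℝ) :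
    expect p (fun x => φ x * condAvg p j g x) = expect p (fun x => φ x * g x) := by
  rw [← condAvg_mul_left p hφ, expect_condAvg]

theorem condAvg_zero_apply (g : (Fin N → Bool) → ℝ) (x : Fin N → Bool) :
    condAvg p 0 g x = expect p g := by
  rw [← expect_condAvg p 0, ← expect_const p (condAvg p 0 g x)]
  exact congrArg _ (funext fun y => condAvg_congr p 0 g fun i hi => absurd hi (Nat.not_lt_zero _))

-- Peel off the factor with the largest index: the others do not depend on its coordinate.
theorem expect_prod_le (hp : ∀ k, p k ∈ Icc 0 1) {Z : Fin N → (Fin N → Bool) → ℝ}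
    {m : Fin N → ℝ} (hZ₀ : ∀ k x, 0 ≤ Z k x)
    (hZ : ∀ k x (i : Fin N) b, k < i → Z k (update x i b) = Z k x)
    (hm : ∀ k x, avgAt p k (Z k) x ≤ m k) (s : Finset (Fin N)) :
    expect p (fun x => ∏ k ∈ s, Z k x) ≤ ∏ k ∈ s, m k := by
  induction s using Finset.induction_on_max with
  | empty => simp [expect_const]
  | insert a s hlt ih =>
    have has : a ∉ s := fun h => lt_irrefl a (hlt a h)
    have hΦ : ∀ x b, ∏ k ∈ s, Z k (update x a b) = ∏ k ∈ s, Z k x := fun x b =>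
      Finset.prod_congr rfl fun k hk => hZ k x a b (hlt k hk)
    have hma : 0 ≤ m a := (Finset.sum_nonneg fun b _ =>
      mul_nonneg (coordWeight_nonneg p hp a b) (hZ₀ a _)).trans (hm a (fun _ => false))
    simp only [Finset.prod_insert has]
    calc expect p (fun x => Z a x * ∏ k ∈ s, Z k x)
        = expect p (fun x => (∏ k ∈ s, Z k x) * avgAt p a (Z a) x) := by
          rw [← expect_avgAt p a]
          congr 1
          ext x
          simp only [mul_comm (Z a _)]
          exact avgAt_mul_left p (φ := fun x => ∏ k ∈ s, Z k x) hΦ (Z a) x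
      _ ≤ expect p (fun x => m a * ∏ k ∈ s, Z k x) := expect_mono p hp fun x => by
          rw [mul_comm (m a)]
          exact mul_le_mul_of_nonneg_left (hm a x) (Finset.prod_nonneg fun k _ => hZ₀ k x)
      _ ≤ m a * ∏ k ∈ s, m k := by
          rw [expect_const_mul]
          exact mul_le_mul_of_nonneg_left ih hma

theorem condAvg_val_eq (k : Fin N) (g : (Fin N → Bool) → ℝ) :
    condAvg p k g = avgAt p k (condAvg p (k + 1 : ℕ) g) :=
  condAvg_of_lt p k.isLt g

theorem avgAt_indicator {k : Fin N} {S : Set (Fin N → Bool)} (hS : ∀ x b, update x k b ∈ S ↔ x ∈ S)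
    (g : (Fin N → Bool) → ℝ) (x : Fin N → Bool) :
    avgAt p k (S.indicator g) x = S.indicator (avgAt p k g) x := by
  by_cases hx : x ∈ S <;> simp [avgAt, hS, hx]

def TypicalLipschitz (f : (Fin N → Bool) → ℝ) (Γ : Set (Fin N → Bool)) (c d : Fin N → ℝ) : Prop :=
  ∀ (k : Fin N) (x x' : Fin N → Bool), (∀ j, j ≠ k → x j = x' j) →
    (x ∈ Γ → |f x - f x'| ≤ c k) ∧ (x ∉ Γ → |f x - f x'| ≤ d k)

section TypicalLipschitz

variable {p} {f : (Fin N → Bool) → ℝ} {Γ : Set (Fin N → Bool)} {c d : Fin N → ℝ}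

theorem TypicalLipschitz.nonneg (hf : TypicalLipschitz f Γ c d) {x : Fin N → Bool} (hx : x ∈ Γ)
    (k : Fin N) : 0 ≤ c k :=
  (abs_nonneg _).trans ((hf k x (update x k (!x k)) fun _ hj => (update_of_ne hj _ _).symm).1 hx)

theorem TypicalLipschitz.abs_sub_le (hf : TypicalLipschitz f Γ c d) (k : Fin N)
    (y : Fin N → Bool) :
    |f (update y k true) - f (update y k false)| ≤
      c k + (d k - c k) *
        (Γᶜ.indicator 1 (update y k true) * Γᶜ.indicator 1 (update y k false)) := by
  have hagree : ∀ b b', ∀ j, j ≠ k → update y k b j = update y k b' j := fun b b' j hj => by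
    rw [update_of_ne hj, update_of_ne hj]
  by_cases h₁ : update y k true ∈ Γ
  · simpa [h₁] using (hf k _ _ (hagree true false)).1 h₁
  by_cases h₀ : update y k false ∈ Γ
  · simpa [h₀, abs_sub_comm] using (hf k _ _ (hagree false true)).1 h₀
  simpa [h₁, h₀] using (hf k _ _ (hagree true false)).2 h₁

end TypicalLipschitz

section BadEvent

variable (Γ : Set (Fin N → Bool)) (γ : Fin N → ℝ)

/-- `x` is bad at `k` when, given its coordinates before `k`, the event `Γ` fails with
conditional probability at least `γ k`. -/
def badAt (k : Fin N) : Set (Fin N → Bool) := {x | γ k ≤ condAvg p k (Γᶜ.indicator 1) x}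

def bad : Set (Fin N → Bool) := Γᶜ ∪ ⋃ k, badAt p Γ γ k

variable {p Γ γ}

theorem update_mem_badAt_iff {k i : Fin N} (hki : k ≤ i) (x : Fin N → Bool) (b : Bool) :
    update x i b ∈ badAt p Γ γ k ↔ x ∈ badAt p Γ γ k := by
  show γ k ≤ _ ↔ γ k ≤ _
  rw [condAvg_update_of_le p (Fin.val_le_of_le hki)]

theorem expect_indicator_union_badAt_le (hp : ∀ k, p k ∈ Icc 0 1) {k : Fin N}
    (hγ : γ k ∈ Ioc 0 1) :
    expect p ((Γᶜ ∪ badAt p Γ γ k).indicator 1) ≤ (γ k)⁻¹ * expect p (Γᶜ.indicator 1) := by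
  set χ : (Fin N → Bool) → ℝ := Γᶜ.indicator 1
  set ι : (Fin N → Bool) → ℝ := (badAt p Γ γ k).indicator 1
  have hι : ∀ x (i : Fin N) b, (k : ℕ) ≤ i → ι (update x i b) = ι x := fun x i b hi => by
    have := update_mem_badAt_iff (p := p) (Γ := Γ) (γ := γ) (Fin.le_iff_val_le_val.2 hi) x b
    by_cases hx : x ∈ badAt p Γ γ k <;> simp [ι, hx, this]
  rw [le_inv_mul_iff₀ hγ.1, ← expect_const_mul]
  -- Markov's inequality for the conditional probabilities of `Γᶜ` on the bad set,
  -- and `γ k ≤ 1` off it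
  calc expect p (fun x => γ k * (Γᶜ ∪ badAt p Γ γ k).indicator 1 x)
      ≤ expect p (fun x => ι x * condAvg p k χ x + (1 - ι x) * χ x) := by
        refine expect_mono p hp fun x => ?_
        by_cases hb : x ∈ badAt p Γ γ k
        · have : γ k ≤ condAvg p k χ x := hb
          simpa [ι, Set.indicator_of_mem hb, Set.indicator_of_mem (Set.mem_union_right Γᶜ hb)]
            using this
        · by_cases hx : x ∈ Γᶜ
          · simp [ι, χ, hb, hx, hγ.2]
          · simp [ι, χ, hb, hx]
    _ = expect p χ := by
        rw [expect_add, expect_mul_condAvg p hι, ← expect_add]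
        congr 1
        ext x
        ring

theorem abs_condAvg_update_sub_le (hp : ∀ k, p k ∈ Icc 0 1) {f : (Fin N → Bool) → ℝ}
    {c d : Fin N → ℝ} (hf : TypicalLipschitz f Γ c d) {k : Fin N} (hcd : c k ≤ d k)
    {x : Fin N → Bool} (hx : x ∉ badAt p Γ γ k) :
    |condAvg p (k + 1 : ℕ) f (update x k true) - condAvg p (k + 1 : ℕ) f (update x k false)| ≤
      c k + γ k * (d k - c k) := by
  set χ : (Fin N → Bool) → ℝ := Γᶜ.indicator 1
  have hχ : ∀ y, χ y ∈ Icc 0 1 := fun y => by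
    by_cases hy : y ∈ Γᶜ <;> simp [χ, hy]
  set Q := condAvg p (k + 1 : ℕ) (fun y => χ (update y k true) * χ (update y k false)) x
  have hk : (k : ℕ) < k + 1 := Nat.lt_succ_self k
  have hQ : ∀ b, Q ≤ condAvg p (k + 1 : ℕ) χ (update x k b) := fun b => by
    rw [← condAvg_update_of_lt p hk]
    refine condAvg_mono p hp _ (fun y => ?_) x
    obtain ⟨h₁0, h₁1⟩ := hχ (update y k true)
    obtain ⟨h₀0, h₀1⟩ := hχ (update y k false)
    cases b <;> nlinarith
  have hQγ : Q ≤ γ k := by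
    refine le_trans ?_ (not_le.1 hx).le
    rw [condAvg_val_eq, avgAt, ← mul_one Q, ← sum_coordWeight p k, Finset.mul_sum]
    exact Finset.sum_le_sum fun b _ => by
      rw [mul_comm Q]
      exact mul_le_mul_of_nonneg_left (hQ b) (coordWeight_nonneg p hp k b)
  calc |condAvg p (k + 1 : ℕ) f (update x k true) - condAvg p (k + 1 : ℕ) f (update x k false)|
      = |condAvg p (k + 1 : ℕ) (fun y => f (update y k true) - f (update y k false)) x| := by
        simp only [condAvg_sub, condAvg_update_of_lt p hk]
    _ ≤ condAvg p (k + 1 : ℕ)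
          (fun y => c k + (d k - c k) * (χ (update y k true) * χ (update y k false))) x :=
        abs_condAvg_le p hp _ (hf.abs_sub_le k) x
    _ = c k + (d k - c k) * Q := by rw [condAvg_add, condAvg_const, condAvg_const_mul]
    _ ≤ c k + γ k * (d k - c k) := by nlinarith

end BadEvent

def increment (f : (Fin N → Bool) → ℝ) (k : Fin N) (x : Fin N → Bool) : ℝ :=
  condAvg p (k + 1 : ℕ) f x - condAvg p k f x

theorem sum_increment (f : (Fin N → Bool) → ℝ) (x : Fin N → Bool) :
    ∑ k, increment p f k x = f x - expect p f := by
  simp only [increment]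
  rw [Fin.sum_univ_eq_sum_range (fun i => condAvg p (i + 1) f x - condAvg p i f x),
    Finset.sum_range_sub (fun i => condAvg p i f x), condAvg_of_le p le_rfl, condAvg_zero_apply]

theorem increment_update (f : (Fin N → Bool) → ℝ) {k i : Fin N} (hki : k < i)
    (x : Fin N → Bool) (b : Bool) : increment p f k (update x i b) = increment p f k x := by
  rw [increment, increment, condAvg_update_of_le p hki, condAvg_update_of_le p hki.le]

theorem avgAt_exp_increment_le (hp : ∀ k, p k ∈ Icc 0 1) (f : (Fin N → Bool) → ℝ) (k : Fin N)
    (x : Fin N → Bool) {a C l : ℝ}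
    (ha : |condAvg p (k + 1 : ℕ) f (update x k true) -
      condAvg p (k + 1 : ℕ) f (update x k false)| ≤ a)
    (haC : a ≤ C) (hl : 0 ≤ l) (hlC : l * C < 3) :
    avgAt p k (fun y => exp (l * increment p f k y)) x ≤
      exp (l ^ 2 * ((1 - p k) * p k * a ^ 2) / (2 * (1 - l * C / 3))) := by
  set u := condAvg p (k + 1 : ℕ) f (update x k true)
  set v := condAvg p (k + 1 : ℕ) f (update x k false)
  have hmean : condAvg p k f x = p k * u + (1 - p k) * v := by
    simp [condAvg_val_eq, avgAt, coordWeight, u, v]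
  convert two_point_mgf_le (hp k) ha haC hl hlC using 1
  simp only [avgAt, Fintype.sum_bool, coordWeight, if_true, Bool.false_eq_true, if_false, increment,
    condAvg_update_of_le p le_rfl, hmean]
  congr 3 <;> ring

theorem expect_indicator_tail_le (hp : ∀ k, p k ∈ Icc 0 1) {f : (Fin N → Bool) → ℝ}
    {Γ : Set (Fin N → Bool)} {γ c d : Fin N → ℝ} (hf : TypicalLipschitz f Γ c d)
    (hcd : ∀ k, c k ≤ d k) {C l : ℝ} (haC : ∀ k, c k + γ k * (d k - c k) ≤ C) (hl : 0 ≤ l)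
    (hlC : l * C < 3) (t : ℝ) :
    expect p ({x | f x ≥ expect p f + t ∧ x ∉ bad p Γ γ}.indicator 1) ≤
      exp (-(l * t) + l ^ 2 * (∑ k, (1 - p k) * p k * (c k + γ k * (d k - c k)) ^ 2) /
        (2 * (1 - l * C / 3))) := by
  set E := {x | f x ≥ expect p f + t ∧ x ∉ bad p Γ γ}
  -- the exponential supermartingale, switched off from the first bad step on
  set Z : Fin N → (Fin N → Bool) → ℝ := fun k =>
    (badAt p Γ γ k)ᶜ.indicator fun y => exp (l * increment p f k y)
  have hZ₀ : ∀ k x, 0 ≤ Z k x := fun k x => Set.indicator_nonneg (fun _ _ => (exp_pos _).le) x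
  have hZ : ∀ k x (i : Fin N) b, k < i → Z k (update x i b) = Z k x := fun k x i b hki => by
    have := update_mem_badAt_iff (p := p) (Γ := Γ) (γ := γ) hki.le x b
    by_cases hx : x ∈ badAt p Γ γ k <;> simp [Z, hx, this, increment_update p f hki]
  have hm : ∀ k x, avgAt p k (Z k) x ≤
      exp (l ^ 2 * ((1 - p k) * p k * (c k + γ k * (d k - c k)) ^ 2) / (2 * (1 - l * C / 3))) := by
    intro k x
    rw [avgAt_indicator p fun x b => by simp only [Set.mem_compl_iff, update_mem_badAt_iff le_rfl]]
    by_cases hx : x ∈ badAt p Γ γ k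
    · simp [hx, (exp_pos _).le]
    · rw [Set.indicator_of_mem hx]
      exact avgAt_exp_increment_le p hp f k x (abs_condAvg_update_sub_le hp hf (hcd k) hx)
        (haC k) hl hlC
  have hpt : ∀ x, E.indicator 1 x ≤ exp (-(l * t)) * ∏ k, Z k x := by
    intro x
    by_cases hx : x ∈ E
    · obtain ⟨hfx, hxB⟩ := hx
      have hgood : ∀ k, x ∈ (badAt p Γ γ k)ᶜ := fun k hk =>
        hxB (Or.inr (Set.mem_iUnion_of_mem k hk))
      rw [Set.indicator_of_mem (show x ∈ E from ⟨hfx, hxB⟩), Pi.one_apply]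
      simp only [Z, Set.indicator_of_mem (hgood _), ← exp_sum, ← Finset.mul_sum, sum_increment,
        ← exp_add]
      exact one_le_exp (by nlinarith)
    · rw [Set.indicator_of_notMem hx]
      exact mul_nonneg (exp_pos _).le (Finset.prod_nonneg fun k _ => hZ₀ k x)
  calc expect p (E.indicator 1)
      ≤ expect p (fun x => exp (-(l * t)) * ∏ k, Z k x) := expect_mono p hp hpt
    _ = exp (-(l * t)) * expect p (fun x => ∏ k, Z k x) := expect_const_mul p _ _
    _ ≤ exp (-(l * t)) * ∏ k, exp (l ^ 2 * ((1 - p k) * p k * (c k + γ k * (d k - c k)) ^ 2) /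
          (2 * (1 - l * C / 3))) :=
        mul_le_mul_of_nonneg_left (expect_prod_le p hp hZ₀ hZ hm Finset.univ) (exp_pos _).le
    _ = _ := by rw [← exp_sum, ← exp_add, Finset.mul_sum, Finset.sum_div]

section ProductMeasure

variable {p} (P : Fin N → Measure Bool) [∀ k, IsProbabilityMeasure (P k)]

theorem measureReal_singleton_eq_coordWeight (hp : ∀ k, p k = (P k {true}).toReal) (k : Fin N)
    (b : Bool) : (P k).real {b} = coordWeight p k b := by
  have hcompl : ({false} : Set Bool) = {true}ᶜ := by ext b; simp
  cases b
  · rw [hcompl, probReal_compl_eq_one_sub (measurableSet_singleton _)]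
    simp [coordWeight, measureReal_def, hp k]
  · simp [coordWeight, measureReal_def, hp k]

theorem mem_Icc_of_eq_toReal (hp : ∀ k, p k = (P k {true}).toReal) (k : Fin N) : p k ∈ Icc 0 1 :=
  ⟨ENNReal.toReal_nonneg.trans_eq (hp k).symm, (hp k).trans_le measureReal_le_one⟩

theorem measureReal_pi_singleton (hp : ∀ k, p k = (P k {true}).toReal) (x : Fin N → Bool) :
    (Measure.pi P).real {x} = weight p x := by
  simp only [measureReal_def, Measure.pi_singleton, ENNReal.toReal_prod, weight,
    ← measureReal_singleton_eq_coordWeight P hp]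

theorem integral_pi_eq_expect (hp : ∀ k, p k = (P k {true}).toReal) (g : (Fin N → Bool) → ℝ) :
    ∫ x, g x ∂Measure.pi P = expect p g := by
  simp [integral_fintype (Integrable.of_finite), measureReal_pi_singleton P hp, expect]

theorem measure_pi_eq_ofReal_expect (hp : ∀ k, p k = (P k {true}).toReal)
    (S : Set (Fin N → Bool)) : Measure.pi P S = ENNReal.ofReal (expect p (S.indicator 1)) := by
  rw [← integral_pi_eq_expect P hp, integral_indicator_one .of_discrete, ofReal_measureReal]

theorem measure_bad_le [Nonempty (Fin N)] (hp : ∀ k, p k = (P k {true}).toReal)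
    {Γ : Set (Fin N → Bool)} {γ : Fin N → ℝ} (hγ : ∀ k, γ k ∈ Ioc 0 1) :
    Measure.pi P (bad p Γ γ) ≤ ∑ k, ENNReal.ofReal (γ k)⁻¹ * Measure.pi P Γᶜ :=
  calc Measure.pi P (bad p Γ γ) = Measure.pi P (⋃ k, Γᶜ ∪ badAt p Γ γ k) := by
        rw [bad, Set.union_iUnion]
    _ ≤ ∑ k, Measure.pi P (Γᶜ ∪ badAt p Γ γ k) := measure_iUnion_fintype_le _ _
    _ ≤ ∑ k, ENNReal.ofReal (γ k)⁻¹ * Measure.pi P Γᶜ := Finset.sum_le_sum fun k _ => by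
        rw [measure_pi_eq_ofReal_expect P hp, measure_pi_eq_ofReal_expect P hp,
          ← ENNReal.ofReal_mul (inv_nonneg.2 (hγ k).1.le)]
        exact ENNReal.ofReal_le_ofReal
          (expect_indicator_union_badAt_le (mem_Icc_of_eq_toReal P hp) (hγ k))

theorem measure_tail_le (hp : ∀ k, p k = (P k {true}).toReal) {f : (Fin N → Bool) → ℝ}
    {Γ : Set (Fin N → Bool)} {γ c d : Fin N → ℝ} (hf : TypicalLipschitz f Γ c d)
    (hcd : ∀ k, c k ≤ d k) {C : ℝ} (hC : 0 ≤ C) (haC : ∀ k, c k + γ k * (d k - c k) ≤ C) {t : ℝ}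
    (ht : 0 ≤ t) :
    Measure.pi P {x | f x ≥ (∫ y, f y ∂(Measure.pi P)) + t ∧ x ∉ bad p Γ γ} ≤
      ENNReal.ofReal (exp (-t ^ 2 /
        (2 * ∑ k, (1 - p k) * p k * (c k + γ k * (d k - c k)) ^ 2 + 2 * C * t / 3))) := by
  have hp01 := mem_Icc_of_eq_toReal P hp
  rw [measure_pi_eq_ofReal_expect P hp, integral_pi_eq_expect P hp]
  refine ENNReal.ofReal_le_ofReal (le_exp_bernstein_of_forall_le ?_ hC ht fun l hl hlC =>
    expect_indicator_tail_le p hp01 hf hcd haC hl hlC t)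
  exact Finset.sum_nonneg fun k _ =>
    mul_nonneg (mul_nonneg (sub_nonneg.2 (hp01 k).2) (hp01 k).1) (sq_nonneg _)

end ProductMeasure

end BoolCube

open BoolCube

/-- **Typical bounded differences inequality for 0-1 variables** (Theorem 1.3 of Warnke).
The coordinates are independent `Bool`-valued random variables (`true` := 1), modeled by
the product measure `Measure.pi P`, with `p k = P(X_k = 1)`. -/
theorem typical_bounded_differences_bool {N : ℕ}
    (P : Fin N → Measure Bool) [∀ k, IsProbabilityMeasure (P k)]
    (p : Fin N → ℝ) (hp : ∀ k, p k = (P k {true}).toReal)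
    (f : (Fin N → Bool) → ℝ)
    (Γ : Set (Fin N → Bool))
    (c d : Fin N → ℝ) (hcd : ∀ k, c k ≤ d k)
    -- the typical Lipschitz condition (TL)
    (hTL : ∀ (k : Fin N) (x x' : Fin N → Bool), (∀ j, j ≠ k → x j = x' j) →
      (x ∈ Γ → |f x - f x'| ≤ c k) ∧ (x ∉ Γ → |f x - f x'| ≤ d k))
    (γ : Fin N → ℝ) (hγ : ∀ k, γ k ∈ Set.Ioc (0 : ℝ) 1)
    -- `C = max_k (c_k + e_k)` where `e_k = γ_k (d_k - c_k)`
    (C : ℝ) (hC : IsGreatest (Set.range fun k => c k + γ k * (d k - c k)) C) :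
    ∃ B : Set (Fin N → Bool), MeasurableSet B ∧
      Measure.pi P B ≤ ∑ k, ENNReal.ofReal ((γ k)⁻¹) * Measure.pi P Γᶜ ∧
      Bᶜ ⊆ Γ ∧
      ∀ t : ℝ, 0 ≤ t →
        Measure.pi P {x | f x ≥ (∫ y, f y ∂(Measure.pi P)) + t ∧ x ∉ B} ≤
          ENNReal.ofReal (Real.exp (-t ^ 2 /
            (2 * ∑ k, (1 - p k) * p k * (c k + γ k * (d k - c k)) ^ 2 +
              2 * C * t / 3))) := by
  obtain ⟨k₀, hk₀⟩ := hC.1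
  have : Nonempty (Fin N) := ⟨k₀⟩
  refine ⟨bad p Γ γ, .of_discrete, measure_bad_le P hp hγ,
    Set.compl_subset_comm.1 Set.subset_union_left, fun t ht => ?_⟩
  rcases Γ.eq_empty_or_nonempty with rfl | ⟨x₀, hx₀⟩
  · simp [bad]
  have hC₀ : 0 ≤ C := hk₀ ▸ add_nonneg (TypicalLipschitz.nonneg (f := f) hTL hx₀ k₀)
    (mul_nonneg (hγ k₀).1.le (sub_nonneg.2 (hcd k₀)))
  exact measure_tail_le P hp hTL hcd hC₀ (fun k => hC.2 ⟨k, rfl⟩) ht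
end

section
/- Bennett-type refinement of the bounded differences inequality for 0-1 variables. Let X=(X_1,...,X_N) be a family of independent random variables with X_k ∈ {0,1} and p_k = P(X_k = 1). Assume f: {0,1}^N → ℝ satisfies the Lipschitz condition (L) with coefficients (c_k)_{k∈[N]}. Let μ = E f(X), C = max_{k∈[N]} c_k, V = Σ_{k∈[N]} (1−p_k)p_k c_k², and φ(x) = (1+x)log(1+x) − x. Then for every t ≥ 0, P(f(X) ≥ μ + t) ≤ exp(−(V/C²)·φ(Ct/V)). -/
/-!
Chernoff's method. With `ψ u = exp u - 1 - u`, the ratio `ψ u / u ^ 2` is nondecreasing, so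
`exp (l * y) ≤ 1 + l * y + y ^ 2 * ψ (l * C) / C ^ 2` whenever `|y| ≤ C` and `l ≥ 0`. For a
two-valued variable taking `a`, `b` with probabilities `p`, `1 - p` and `|a - b| ≤ c_k` this bounds
the moment generating function by that of its mean times `exp (p (1 - p) c_k ^ 2 ψ (l C) / C ^ 2)`.
Averaging `f` over one coordinate at a time preserves (L) for the remaining coordinates, so by
induction `E exp (l (f - μ)) ≤ exp (V ψ (l C) / C ^ 2)`, and Markov's inequality at
`l = log (1 + C t / V) / C` gives the bound.
-/

open Real Nat MeasureTheory ProbabilityTheory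

namespace Real

theorem hasSum_exp_sub_one_sub (x : ℝ) :
    HasSum (fun n : ℕ => x ^ (n + 2) / (n + 2)!) (exp x - 1 - x) := by
  have h := (hasSum_nat_add_iff' 2).mpr (NormedSpace.expSeries_div_hasSum_exp x)
  rw [← exp_eq_exp_ℝ] at h
  simpa [Finset.sum_range_succ, sub_sub] using h

-- Equivalently `(exp u - 1 - u) / u ^ 2 ≤ (exp v - 1 - v) / v ^ 2`; the exponential series are
-- compared termwise, `u ^ (n + 2) ≤ u ^ 2 * v ^ n`.
theorem sq_mul_exp_sub_one_sub_le {u v : ℝ} (h : |u| ≤ v) :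
    v ^ 2 * (exp u - 1 - u) ≤ u ^ 2 * (exp v - 1 - v) := by
  refine hasSum_le (fun n => ?_) ((hasSum_exp_sub_one_sub u).mul_left _)
    ((hasSum_exp_sub_one_sub v).mul_left _)
  have hpow : u ^ (n + 2) ≤ u ^ 2 * v ^ n := calc
    u ^ (n + 2) ≤ |u| ^ (n + 2) := by rw [← abs_pow]; exact le_abs_self _
    _ = u ^ 2 * |u| ^ n := by rw [pow_add, sq_abs]; ring
    _ ≤ u ^ 2 * v ^ n := by gcongr
  calc v ^ 2 * (u ^ (n + 2) / (n + 2)!) ≤ v ^ 2 * (u ^ 2 * v ^ n / (n + 2)!) := by gcongr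
    _ = u ^ 2 * (v ^ (n + 2) / (n + 2)!) := by ring

theorem exp_mul_le_one_add_add_sq_mul {y C l : ℝ} (hy : |y| ≤ C) (hC : 0 < C) (hl : 0 ≤ l) :
    exp (l * y) ≤ 1 + l * y + y ^ 2 * ((exp (l * C) - 1 - l * C) / C ^ 2) := by
  rcases hl.eq_or_lt with rfl | hl
  · simp
  have h := sq_mul_exp_sub_one_sub_le (u := l * y) (v := l * C)
    (by rw [abs_mul, abs_of_pos hl]; gcongr)
  have hscaled : C ^ 2 * (exp (l * y) - 1 - l * y) ≤ y ^ 2 * (exp (l * C) - 1 - l * C) := by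
    refine le_of_mul_le_mul_left ?_ (by positivity : 0 < l ^ 2)
    linarith
  have hrem : exp (l * y) - 1 - l * y ≤ y ^ 2 * ((exp (l * C) - 1 - l * C) / C ^ 2) := by
    rw [mul_div_assoc', le_div_iff₀ (by positivity)]
    linarith
  linarith

theorem mul_exp_add_mul_exp_le {p q a b c C l : ℝ} (hp : 0 ≤ p) (hq : 0 ≤ q) (hpq : p + q = 1)
    (hab : |a - b| ≤ c) (hcC : c ≤ C) (hC : 0 < C) (hl : 0 ≤ l) :
    p * exp (l * a) + q * exp (l * b) ≤
      exp (l * (p * a + q * b) + p * q * c ^ 2 * ((exp (l * C) - 1 - l * C) / C ^ 2)) := by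
  set K := (exp (l * C) - 1 - l * C) / C ^ 2
  have hK : 0 ≤ K := div_nonneg (by linarith [add_one_le_exp (l * C)]) (sq_nonneg C)
  have hdev {s : ℝ} (hs : 0 ≤ s) (hs1 : s ≤ 1) : |s * (a - b)| ≤ C := by
    rw [abs_mul, abs_of_nonneg hs]
    nlinarith [abs_nonneg (a - b)]
  have ha := exp_mul_le_one_add_add_sq_mul (hdev hq (by linarith)) hC hl
  have hb := exp_mul_le_one_add_add_sq_mul (y := -(p * (a - b)))
    (by rw [abs_neg]; exact hdev hp (by linarith)) hC hl
  have hsq : (a - b) ^ 2 ≤ c ^ 2 := sq_le_sq' (abs_le.mp hab).1 (abs_le.mp hab).2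
  -- expand around the mean `p * a + q * b`, from which `a` and `b` deviate by `q * (a - b)` and
  -- `-(p * (a - b))`
  calc p * exp (l * a) + q * exp (l * b)
      = exp (l * (p * a + q * b)) *
          (p * exp (l * (q * (a - b))) + q * exp (l * -(p * (a - b)))) := by
        have ea : l * a = l * (p * a + q * b) + l * (q * (a - b)) := by
          linear_combination -(l * a) * hpq
        have eb : l * b = l * (p * a + q * b) + l * -(p * (a - b)) := by
          linear_combination -(l * b) * hpq
        rw [ea, eb, exp_add, exp_add]
        ring
    _ ≤ exp (l * (p * a + q * b)) * (1 + p * q * c ^ 2 * K) := by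
        refine mul_le_mul_of_nonneg_left ?_ (exp_pos _).le
        calc _ ≤ p * (1 + l * (q * (a - b)) + (q * (a - b)) ^ 2 * K)
              + q * (1 + l * -(p * (a - b)) + (-(p * (a - b))) ^ 2 * K) := by gcongr
          _ = 1 + p * q * (a - b) ^ 2 * K := by linear_combination (1 + p * q * (a - b) ^ 2 * K) * hpq
          _ ≤ 1 + p * q * c ^ 2 * K := by gcongr
    _ ≤ exp (l * (p * a + q * b)) * exp (p * q * c ^ 2 * K) := by
        gcongr
        linarith [add_one_le_exp (p * q * c ^ 2 * K)]
    _ = _ := by rw [← exp_add]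
end Real

theorem sum_measureReal_singleton_eq_one {α : Type*} [Fintype α] [MeasurableSpace α]
    [MeasurableSingletonClass α] (μ : Measure α) [IsProbabilityMeasure μ] :
    ∑ a, μ.real {a} = 1 := by
  rw [sum_measureReal_singleton, Finset.coe_univ, probReal_univ]

def productMean {α : Type*} [Fintype α] {n : ℕ} (w : Fin n → α → ℝ) (g : (Fin n → α) → ℝ) : ℝ :=
  ∑ x, (∏ k, w k (x k)) * g x

def HasBoundedDifferences {ι α : Type*} (f : (ι → α) → ℝ) (c : ι → ℝ) : Prop :=
  ∀ k x x', (∀ j, j ≠ k → x j = x' j) → |f x - f x'| ≤ c k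

section ProductMean

variable {α : Type*} [Fintype α] {n : ℕ}

theorem productMean_succ (w : Fin (n + 1) → α → ℝ) (g : (Fin (n + 1) → α) → ℝ) :
    productMean w g =
      productMean (fun k => w k.succ) (fun y => ∑ a, w 0 a * g (Fin.cons a y)) := by
  unfold productMean
  rw [← (Fin.consEquiv fun _ => α).sum_comp, Fintype.sum_prod_type, Finset.sum_comm]
  refine Finset.sum_congr rfl fun y _ => ?_
  rw [Finset.mul_sum]
  refine Finset.sum_congr rfl fun a _ => ?_
  simp only [Fin.consEquiv, Equiv.coe_fn_mk, Fin.prod_univ_succ, Fin.cons_zero, Fin.cons_succ]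
  ring

theorem productMean_mono {w : Fin n → α → ℝ} (hw : ∀ k a, 0 ≤ w k a) {g h : (Fin n → α) → ℝ}
    (hgh : ∀ x, g x ≤ h x) : productMean w g ≤ productMean w h :=
  Finset.sum_le_sum fun x _ =>
    mul_le_mul_of_nonneg_left (hgh x) (Finset.prod_nonneg fun k _ => hw k (x k))

theorem productMean_const_mul (w : Fin n → α → ℝ) (r : ℝ) (g : (Fin n → α) → ℝ) :
    productMean w (fun x => r * g x) = r * productMean w g := by
  simp only [productMean, Finset.mul_sum, mul_left_comm r]

theorem integral_pi_eq_productMean [MeasurableSpace α] [MeasurableSingletonClass α]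
    (P : Fin n → Measure α) [∀ k, IsFiniteMeasure (P k)] (g : (Fin n → α) → ℝ) :
    ∫ x, g x ∂Measure.pi P = productMean (fun k a => (P k).real {a}) g := by
  rw [integral_fintype .of_finite]
  refine Finset.sum_congr rfl fun x _ => ?_
  rw [smul_eq_mul, measureReal_def, ← Set.univ_pi_singleton, Measure.pi_pi,
    ENNReal.toReal_prod]
  rfl

end ProductMean

namespace HasBoundedDifferences

variable {α : Type*} {n : ℕ} {f : (Fin (n + 1) → α) → ℝ} {c : Fin (n + 1) → ℝ}

theorem abs_sub_cons_le (hf : HasBoundedDifferences f c) (a b : α) (y : Fin n → α) :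
    |f (Fin.cons a y) - f (Fin.cons b y)| ≤ c 0 :=
  hf 0 _ _ fun j hj => by
    obtain ⟨i, rfl⟩ := Fin.exists_succ_eq.mpr hj
    simp only [Fin.cons_succ]

theorem average_cons [Fintype α] (hf : HasBoundedDifferences f c) {v : α → ℝ}
    (hv : ∀ a, 0 ≤ v a) (hv1 : ∑ a, v a = 1) :
    HasBoundedDifferences (fun y => ∑ a, v a * f (Fin.cons a y)) (fun k => c k.succ) := by
  intro k y y' hyy'
  have hcons (a : α) : |f (Fin.cons a y) - f (Fin.cons a y')| ≤ c k.succ := by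
    refine hf k.succ _ _ fun j hj => ?_
    cases j using Fin.cases with
    | zero => rfl
    | succ i => exact hyy' i fun h => hj (congrArg Fin.succ h)
  calc |∑ a, v a * f (Fin.cons a y) - ∑ a, v a * f (Fin.cons a y')|
      = |∑ a, v a * (f (Fin.cons a y) - f (Fin.cons a y'))| := by
        simp only [mul_sub, Finset.sum_sub_distrib]
    _ ≤ ∑ a, v a * |f (Fin.cons a y) - f (Fin.cons a y')| := by
        refine (Finset.abs_sum_le_sum_abs _ _).trans_eq (Finset.sum_congr rfl fun a _ => ?_)
        rw [abs_mul, abs_of_nonneg (hv a)]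
    _ ≤ ∑ a, v a * c k.succ := by gcongr with a; exacts [hv a, hcons a]
    _ = c k.succ := by rw [← Finset.sum_mul, hv1, one_mul]

end HasBoundedDifferences

theorem productMean_exp_le {n : ℕ} {w : Fin n → Bool → ℝ} (hw : ∀ k b, 0 ≤ w k b)
    (hw1 : ∀ k, ∑ b, w k b = 1) {f : (Fin n → Bool) → ℝ} {c : Fin n → ℝ}
    (hf : HasBoundedDifferences f c) {C l : ℝ} (hcC : ∀ k, c k ≤ C) (hC : 0 < C) (hl : 0 ≤ l) :
    productMean w (fun x => exp (l * f x)) ≤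
      exp (l * productMean w f +
        (∑ k, w k true * w k false * c k ^ 2) * ((exp (l * C) - 1 - l * C) / C ^ 2)) := by
  induction n with
  | zero => simp [productMean]
  | succ n ih =>
    set K := (exp (l * C) - 1 - l * C) / C ^ 2
    set g : (Fin n → Bool) → ℝ := fun y => ∑ b, w 0 b * f (Fin.cons b y)
    have hw01 : w 0 true + w 0 false = 1 := by rw [← hw1 0, Fintype.sum_bool]
    have hmean : productMean (fun k => w k.succ) g = productMean w f := (productMean_succ w f).symm
    have hstep (y : Fin n → Bool) :
        ∑ b, w 0 b * exp (l * f (Fin.cons b y)) ≤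
          exp (w 0 true * w 0 false * c 0 ^ 2 * K) * exp (l * g y) := by
      rw [← exp_add, add_comm _ (l * g y)]
      simp only [g, Fintype.sum_bool]
      exact mul_exp_add_mul_exp_le (hw 0 true) (hw 0 false) hw01 (hf.abs_sub_cons_le _ _ y)
        (hcC 0) hC hl
    calc productMean w (fun x => exp (l * f x))
        ≤ productMean (fun k => w k.succ)
            (fun y => exp (w 0 true * w 0 false * c 0 ^ 2 * K) * exp (l * g y)) := by
          rw [productMean_succ]
          exact productMean_mono (fun k => hw k.succ) hstep
      _ ≤ exp (w 0 true * w 0 false * c 0 ^ 2 * K) *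
            exp (l * productMean (fun k => w k.succ) g +
              (∑ k : Fin n, w k.succ true * w k.succ false * c k.succ ^ 2) * K) := by
          rw [productMean_const_mul]
          gcongr
          exact ih (fun k => hw k.succ) (fun k => hw1 k.succ)
            (hf.average_cons (hw 0) (hw1 0)) (fun k => hcC k.succ)
      _ = _ := by
          rw [← exp_add, hmean, Fin.sum_univ_succ]
          ring_nf

theorem mgf_pi_bool_le {n : ℕ} (P : Fin n → Measure Bool) [∀ k, IsProbabilityMeasure (P k)]
    {f : (Fin n → Bool) → ℝ} {c : Fin n → ℝ} (hf : HasBoundedDifferences f c) {C l : ℝ}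
    (hcC : ∀ k, c k ≤ C) (hC : 0 < C) (hl : 0 ≤ l) :
    mgf f (Measure.pi P) l ≤
      exp (l * ∫ x, f x ∂Measure.pi P +
        (∑ k, (P k).real {true} * (P k).real {false} * c k ^ 2) *
          ((exp (l * C) - 1 - l * C) / C ^ 2)) := by
  rw [mgf, integral_pi_eq_productMean, integral_pi_eq_productMean]
  exact productMean_exp_le (fun _ _ => measureReal_nonneg)
    (fun k => sum_measureReal_singleton_eq_one (P k)) hf hcC hC hl

-- Chernoff's bound at `l = log (1 + C t / V) / C`, where the exponent `-l t + V ψ (l C) / C ^ 2`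
-- is minimal.
theorem measure_ge_le_bennett {Ω : Type*} [MeasurableSpace Ω] {μ : Measure Ω}
    [IsProbabilityMeasure μ] {X : Ω → ℝ} {C V t : ℝ} (hC : 0 < C) (hV : 0 < V) (ht : 0 < t)
    (hint : ∀ l, Integrable (fun ω => exp (l * X ω)) μ)
    (hmgf : ∀ l, 0 ≤ l →
      mgf X μ l ≤ exp (l * ∫ ω, X ω ∂μ + V * ((exp (l * C) - 1 - l * C) / C ^ 2))) :
    μ {ω | X ω ≥ ∫ ω, X ω ∂μ + t} ≤
      ENNReal.ofReal (exp (-(V / C ^ 2) *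
        ((1 + C * t / V) * log (1 + C * t / V) - C * t / V))) := by
  set s := C * t / V
  have hs : 0 < 1 + s := by positivity
  set l := log (1 + s) / C
  have hl : 0 ≤ l := div_nonneg (log_nonneg (by linarith [show 0 ≤ s by positivity])) hC.le
  have hlC : l * C = log (1 + s) := div_mul_cancel₀ _ hC.ne'
  rw [← ofReal_measureReal]
  refine ENNReal.ofReal_le_ofReal ((measure_ge_le_exp_mul_mgf _ hl (hint l)).trans ?_)
  calc exp (-l * (∫ ω, X ω ∂μ + t)) * mgf X μ l
      ≤ exp (-l * (∫ ω, X ω ∂μ + t)) *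
          exp (l * ∫ ω, X ω ∂μ + V * ((exp (l * C) - 1 - l * C) / C ^ 2)) := by
        gcongr
        exact hmgf l hl
    _ = _ := by
        rw [← exp_add, hlC, exp_log hs]
        congr 1
        simp only [s, l]
        field_simp
        ring

/-- **Bennett-type refinement of the bounded differences inequality for 0-1 variables**
(Remark 1.5 of Warnke, applied to Corollary 1.4).
The coordinates are independent `Bool`-valued random variables (`true` := 1), modeled by
the product measure `Measure.pi P`, with `p k = P(X_k = 1)`;
`φ(x) = (1+x) log (1+x) - x`. -/
theorem bennett_bounded_differences_bool {N : ℕ}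
    (P : Fin N → Measure Bool) [∀ k, IsProbabilityMeasure (P k)]
    (p : Fin N → ℝ) (hp : ∀ k, p k = (P k {true}).toReal)
    (f : (Fin N → Bool) → ℝ)
    (c : Fin N → ℝ)
    -- the Lipschitz condition (L)
    (hL : ∀ (k : Fin N) (x x' : Fin N → Bool), (∀ j, j ≠ k → x j = x' j) →
      |f x - f x'| ≤ c k)
    -- `C = max_k c_k` and `V = ∑_k (1-p_k) p_k c_k²`
    (C : ℝ) (hC : IsGreatest (Set.range c) C)
    (V : ℝ) (hV : V = ∑ k, (1 - p k) * p k * c k ^ 2)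
    (t : ℝ) (ht : 0 ≤ t) :
    Measure.pi P {x | f x ≥ (∫ y, f y ∂(Measure.pi P)) + t} ≤
      ENNReal.ofReal (Real.exp (-(V / C ^ 2) *
        ((1 + C * t / V) * Real.log (1 + C * t / V) - C * t / V))) := by
  have hc (k : Fin N) : 0 ≤ c k := by simpa using hL k (fun _ => true) _ fun _ _ => rfl
  have hC0 : 0 ≤ C := by obtain ⟨k, rfl⟩ := hC.1; exact hc k
  have hVP : V = ∑ k, (P k).real {true} * (P k).real {false} * c k ^ 2 := by
    refine hV.trans (Finset.sum_congr rfl fun k _ => ?_)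
    have hPk : (P k).real {true} + (P k).real {false} = 1 := by
      rw [← Fintype.sum_bool fun b => (P k).real {b}, sum_measureReal_singleton_eq_one]
    rw [hp k, ← measureReal_def]
    linear_combination (-((P k).real {true} * c k ^ 2)) * hPk
  have hV0 : 0 ≤ V := hVP ▸ Finset.sum_nonneg fun k _ => by positivity
  -- the degenerate cases `C = 0`, `t = 0` and `V = 0` (where `C * t / V = 0` by the convention
  -- `x / 0 = 0`) all make the bound `exp 0 = 1`
  by_cases hs : C * t / V = 0
  · rw [hs]
    simpa using prob_le_one
  obtain ⟨⟨hC', ht'⟩, hV'⟩ : (C ≠ 0 ∧ t ≠ 0) ∧ V ≠ 0 := by simpa [not_or] using hs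
  have hCpos : 0 < C := hC0.lt_of_ne' hC'
  refine measure_ge_le_bennett hCpos (hV0.lt_of_ne' hV') (ht.lt_of_ne' ht') (fun _ => .of_finite)
    fun l hl => ?_
  rw [hVP]
  exact mgf_pi_bool_le P hL (fun k => hC.2 ⟨k, rfl⟩) hCpos hl
end

section
/- Truncation inequality in the product case. Let X=(X_1,...,X_N) be a family of independent random variables with X_k taking values in Λ_k, let Γ_k ⊆ Λ_k with P(X ∈ ∏_{j∈[N]} Γ_j) > 0, and assume f: ∏_{j∈[N]} Λ_j → ℝ satisfies |f(x) − f(x̃)| ≤ c_k whenever x, x̃ ∈ ∏_{j∈[N]} Γ_j differ only in the k-th coordinate, and |f(x) − f(x̃)| ≤ s for all x, x̃ in the full product space. Then, setting μ = E f(X), Γ = ∏_{j∈[N]} Γ_j and Δ = s·P(X ∉ Γ), for every t ≥ 0 one has P(f(X) ≥ μ + t + Δ and X ∈ Γ) ≤ exp(−2t² / Σ_{k∈[N]} c_k²). -/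
/-!
Replace `f` by `g = f ∘ r`, where `r` retracts every coordinate into `Γ_k` (sending points outside
to a fixed point of `Γ`, which exists since `P(X ∈ Γ) > 0`). Then `g = f` on `Γ` and `|g - f| ≤ s`,
so `E g ≤ E f + Δ`, while `g` has bounded differences `c_k` on the whole product space.
McDiarmid's argument — peel off one coordinate, apply Hoeffding's lemma to the fibre and induction
to the average over that coordinate — makes `g - E g` sub-Gaussian with variance proxy
`∑ c_k² / 4`, and the Chernoff bound gives `exp (-2 t² / ∑ c_k²)`.
-/

open MeasureTheory ProbabilityTheory Real
open scoped NNReal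

namespace ProbabilityTheory

lemma hasSubgaussianMGF_of_abs_sub_le {Ω : Type*} {mΩ : MeasurableSpace Ω} {μ : Measure Ω}
    [IsProbabilityMeasure μ] {X : Ω → ℝ} {c : ℝ} (hX : AEMeasurable X μ)
    (hc : ∀ ω ω', |X ω - X ω'| ≤ c) :
    HasSubgaussianMGF (fun ω ↦ X ω - μ[X]) ((‖c‖₊ / 2) ^ 2) μ := by
  have hΩ : Nonempty Ω := nonempty_of_isProbabilityMeasure μ
  have hbdd : BddBelow (Set.range X) :=
    ⟨X hΩ.some - c, by rintro _ ⟨ω, rfl⟩; linarith [(abs_le.mp (hc hΩ.some ω)).2]⟩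
  have hmem : ∀ ω, X ω ∈ Set.Icc (⨅ ω, X ω) ((⨅ ω, X ω) + c) := fun ω ↦
    ⟨ciInf_le hbdd ω, by
      have : X ω - c ≤ ⨅ ω', X ω' := le_ciInf fun ω' ↦ by linarith [(abs_le.mp (hc ω ω')).2]
      linarith⟩
  simpa using hasSubgaussianMGF_of_mem_Icc hX (ae_of_all μ hmem)

section Product

variable {α β : Type*} [MeasurableSpace α] [MeasurableSpace β]
  {μ : Measure α} {ν : Measure β} [IsProbabilityMeasure μ] [IsProbabilityMeasure ν]

lemma HasSubgaussianMGF.prod_of_fiber {F : α × β → ℝ} {a b : ℝ} {c₁ c₂ : ℝ≥0}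
    (hF : Measurable F) (hFab : ∀ p, F p ∈ Set.Icc a b)
    (h₁ : ∀ y, HasSubgaussianMGF (fun x ↦ F (x, y) - ∫ x', F (x', y) ∂μ) c₁ μ)
    (h₂ : HasSubgaussianMGF (fun y ↦ ∫ x, F (x, y) ∂μ - ∫ p, F p ∂μ.prod ν) c₂ ν) :
    HasSubgaussianMGF (fun p ↦ F p - ∫ q, F q ∂μ.prod ν) (c₁ + c₂) (μ.prod ν) := by
  set m := ∫ q, F q ∂μ.prod ν
  set h := fun y ↦ ∫ x, F (x, y) ∂μ
  have hint (t : ℝ) : Integrable (fun p ↦ exp (t * (F p - m))) (μ.prod ν) :=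
    integrable_exp_mul_of_mem_Icc (a := a - m) (b := b - m) (hF.sub_const m).aemeasurable
      (ae_of_all _ fun p ↦ ⟨by linarith [(hFab p).1], by linarith [(hFab p).2]⟩)
  refine ⟨hint, fun t ↦ ?_⟩
  calc mgf (fun p ↦ F p - m) (μ.prod ν) t
      = ∫ y, exp (t * (h y - m)) * mgf (fun x ↦ F (x, y) - h y) μ t ∂ν := by
        rw [mgf, integral_prod_symm _ (hint t)]
        congr 1 with y
        rw [mgf, ← integral_const_mul]
        congr 1 with x
        rw [← exp_add]
        ring_nf
    _ ≤ ∫ y, exp (t * (h y - m)) * exp (c₁ * t ^ 2 / 2) ∂ν := by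
        refine integral_mono_of_nonneg (ae_of_all _ fun y ↦ mul_nonneg (exp_nonneg _) mgf_nonneg)
          ((h₂.integrable_exp_mul t).mul_const _) (ae_of_all _ fun y ↦ ?_)
        exact mul_le_mul_of_nonneg_left ((h₁ y).mgf_le t) (exp_nonneg _)
    _ = mgf (fun y ↦ h y - m) ν t * exp (c₁ * t ^ 2 / 2) := integral_mul_const _ _
    _ ≤ exp (c₂ * t ^ 2 / 2) * exp (c₁ * t ^ 2 / 2) := by
        gcongr
        exact h₂.mgf_le t
    _ = exp (↑(c₁ + c₂) * t ^ 2 / 2) := by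
        rw [← exp_add]
        push_cast
        ring_nf

end Product

section BoundedDifferences

variable {ι : Type*} {Λ : ι → Type*}

def HasBoundedDifferences (g : (∀ k, Λ k) → ℝ) (c : ι → ℝ) : Prop :=
  ∀ k (x x' : ∀ j, Λ j), (∀ j, j ≠ k → x j = x' j) → |g x - g x'| ≤ c k

namespace HasBoundedDifferences

variable {g : (∀ k, Λ k) → ℝ} {c : ι → ℝ}

lemma abs_sub_le_sum [Fintype ι] (hg : HasBoundedDifferences g c) (x x' : ∀ k, Λ k) :
    |g x - g x'| ≤ ∑ k, c k := by
  classical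
  have key (S : Finset ι) : |g (S.piecewise x x') - g x'| ≤ ∑ k ∈ S, c k := by
    induction S using Finset.induction_on with
    | empty => simp
    | insert k S hk ih =>
      rw [Finset.piecewise_insert, Finset.sum_insert hk]
      refine (abs_sub_le _ (g (S.piecewise x x')) _).trans (add_le_add ?_ ih)
      exact hg k _ _ fun j hj ↦ Function.update_of_ne hj _ _
  simpa using key Finset.univ

lemma integral {γ : Type*} [MeasurableSpace γ] {ν : Measure γ} [IsProbabilityMeasure ν]
    {G : γ → (∀ k, Λ k) → ℝ} (hG : ∀ a, HasBoundedDifferences (G a) c)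
    (hint : ∀ x, Integrable (fun a ↦ G a x) ν) :
    HasBoundedDifferences (fun x ↦ ∫ a, G a x ∂ν) c := by
  intro k x x' hxx'
  rw [← integral_sub (hint x) (hint x')]
  simpa using norm_integral_le_of_norm_le_const (μ := ν) (f := fun a ↦ G a x - G a x')
    (ae_of_all ν fun a ↦ hG a k x x' hxx')

lemma abs_sub_insertNth_le {n : ℕ} {Λ : Fin (n + 1) → Type*} {g : (∀ k, Λ k) → ℝ}
    {c : Fin (n + 1) → ℝ} (hg : HasBoundedDifferences g c) (i : Fin (n + 1)) (a a' : Λ i)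
    (y : ∀ j, Λ (i.succAbove j)) : |g (i.insertNth a y) - g (i.insertNth a' y)| ≤ c i :=
  hg i _ _ fun l hl ↦ by
    obtain ⟨j, rfl⟩ := Fin.exists_succAbove_eq hl
    simp only [Fin.insertNth_apply_succAbove]

lemma comp_insertNth {n : ℕ} {Λ : Fin (n + 1) → Type*} {g : (∀ k, Λ k) → ℝ}
    {c : Fin (n + 1) → ℝ} (hg : HasBoundedDifferences g c) (i : Fin (n + 1)) (a : Λ i) :
    HasBoundedDifferences (fun y ↦ g (i.insertNth a y)) (fun j ↦ c (i.succAbove j)) := by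
  intro j y y' hyy'
  refine hg (i.succAbove j) _ _ fun l hl ↦ ?_
  rcases Fin.eq_self_or_eq_succAbove i l with rfl | ⟨l, rfl⟩
  · simp only [Fin.insertNth_apply_same]
  · simp only [Fin.insertNth_apply_succAbove]
    exact hyy' l fun h ↦ hl (h ▸ rfl)

end HasBoundedDifferences

end BoundedDifferences

theorem HasBoundedDifferences.hasSubgaussianMGF_pi {N : ℕ} {Λ : Fin N → Type*}
    [∀ k, MeasurableSpace (Λ k)] (P : ∀ k, Measure (Λ k)) [∀ k, IsProbabilityMeasure (P k)]
    {g : (∀ k, Λ k) → ℝ} {c : Fin N → ℝ} (hg : Measurable g) (hgc : HasBoundedDifferences g c) :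
    HasSubgaussianMGF (fun x ↦ g x - ∫ y, g y ∂Measure.pi P) (∑ k, (‖c k‖₊ / 2) ^ 2)
      (Measure.pi P) := by
  induction N with
  | zero =>
    have hg_const (x : ∀ k, Λ k) : g x = g default := congrArg g (Subsingleton.elim _ _)
    simp [hg_const]
  | succ n ih =>
    have he := measurePreserving_piFinSuccAbove P 0
    set e := MeasurableEquiv.piFinSuccAbove Λ 0
    set G := fun p ↦ g (e.symm p)
    have hG : Measurable G := hg.comp e.symm.measurable
    have hGe (x : ∀ k, Λ k) : G (e x) = g x := congrArg g (e.symm_apply_apply x)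
    have hΛ : Nonempty (∀ k, Λ k) := nonempty_of_isProbabilityMeasure (Measure.pi P)
    have hGab (p) : G p ∈ Set.Icc (g hΛ.some - ∑ k, c k) (g hΛ.some + ∑ k, c k) := by
      have := abs_le.mp (hgc.abs_sub_le_sum (e.symm p) hΛ.some)
      constructor <;> linarith [this.1, this.2]
    have hfiber (y) : Measurable fun a ↦ G (a, y) := hG.comp measurable_prodMk_right
    have h₁ (y) := hasSubgaussianMGF_of_abs_sub_le (μ := P 0) (hfiber y).aemeasurable
      fun a a' ↦ hgc.abs_sub_insertNth_le 0 a a' y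
    have h₂ := ih (fun j ↦ P (Fin.succAbove 0 j))
      (hG.stronglyMeasurable.integral_prod_left' (μ := P 0)).measurable
      (HasBoundedDifferences.integral (fun a ↦ hgc.comp_insertNth 0 a)
        fun y ↦ Integrable.of_mem_Icc _ _ (hfiber y).aemeasurable (ae_of_all _ fun a ↦ hGab _))
    rw [← integral_prod_symm G (Integrable.of_mem_Icc _ _ hG.aemeasurable (ae_of_all _ hGab))]
      at h₂
    have h := HasSubgaussianMGF.prod_of_fiber hG hGab h₁ h₂
    rw [← he.integral_comp', ← Fin.sum_univ_succAbove (fun k ↦ (‖c k‖₊ / 2) ^ 2) 0,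
      ← he.map_eq] at h
    simpa only [Function.comp_def, hGe] using h.of_map e.measurable.aemeasurable

end ProbabilityTheory

section Retraction

variable {ι : Type*} {Λ : ι → Type*}

open Classical in
noncomputable def piRetraction (Γ : ∀ k, Set (Λ k)) (γ : ∀ k, Λ k) (x : ∀ k, Λ k) : ∀ k, Λ k :=
  fun k ↦ if x k ∈ Γ k then x k else γ k

variable {Γ : ∀ k, Set (Λ k)} {γ : ∀ k, Λ k}

lemma piRetraction_mem (hγ : γ ∈ Set.univ.pi Γ) (x : ∀ k, Λ k) :
    piRetraction Γ γ x ∈ Set.univ.pi Γ := fun k _ ↦ by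
  unfold piRetraction
  split_ifs with h
  exacts [h, hγ k trivial]

lemma piRetraction_of_mem {x : ∀ k, Λ k} (hx : x ∈ Set.univ.pi Γ) : piRetraction Γ γ x = x :=
  funext fun k ↦ if_pos (hx k trivial)

lemma measurable_piRetraction [∀ k, MeasurableSpace (Λ k)] (hΓ : ∀ k, MeasurableSet (Γ k)) :
    Measurable (piRetraction Γ γ) :=
  measurable_pi_lambda _ fun k ↦
    (measurable_pi_apply k).piecewise ((hΓ k).preimage (measurable_pi_apply k)) measurable_const

lemma ProbabilityTheory.hasBoundedDifferences_comp_piRetraction {f : (∀ k, Λ k) → ℝ} {c : ι → ℝ}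
    (hγ : γ ∈ Set.univ.pi Γ)
    (hf : ∀ k (x x' : ∀ j, Λ j), x ∈ Set.univ.pi Γ → x' ∈ Set.univ.pi Γ →
      (∀ j, j ≠ k → x j = x' j) → |f x - f x'| ≤ c k) :
    HasBoundedDifferences (fun x ↦ f (piRetraction Γ γ x)) c := fun k x x' hxx' ↦
  hf k _ _ (piRetraction_mem hγ x) (piRetraction_mem hγ x') fun j hj ↦ by
    simp only [piRetraction]
    rw [hxx' j hj]

end Retraction

lemma MeasureTheory.integral_le_integral_add_of_eqOn {α : Type*} [MeasurableSpace α]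
    {μ : Measure α} [IsFiniteMeasure μ] {f g : α → ℝ} {s : Set α} {C : ℝ} (hs : MeasurableSet s)
    (hf : Integrable f μ) (hg : Integrable g μ) (hfg : Set.EqOn g f s) (hC : ∀ x, g x - f x ≤ C) :
    ∫ x, g x ∂μ ≤ ∫ x, f x ∂μ + C * μ.real sᶜ := by
  have hind (x : α) : g x - f x ≤ sᶜ.indicator (fun _ ↦ C) x := by
    by_cases hx : x ∈ s
    · simp [hx, hfg hx]
    · simpa [hx] using hC x
  have := integral_mono (f := fun x ↦ g x - f x) (hg.sub hf)
    ((integrable_const C).indicator hs.compl) hind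
  rw [integral_sub hg hf, integral_indicator_const _ hs.compl, smul_eq_mul] at this
  linarith

open ProbabilityTheory in
/-- `X = (X_1, …, X_N)` is modelled by the product `Measure.pi P` of the laws of its independent
coordinates. -/
theorem truncation_product_case {N : ℕ} {Λ : Fin N → Type*}
    [∀ k, MeasurableSpace (Λ k)]
    (P : ∀ k, Measure (Λ k)) [∀ k, IsProbabilityMeasure (P k)]
    (f : (∀ k, Λ k) → ℝ) (hf : Measurable f)
    (s : ℝ) (hs : ∀ x x' : ∀ j, Λ j, |f x - f x'| ≤ s)
    (Γloc : ∀ k, Set (Λ k)) (hΓloc : ∀ k, MeasurableSet (Γloc k))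
    (hpos : 0 < Measure.pi P (Set.univ.pi Γloc))
    (c : Fin N → ℝ)
    -- the Lipschitz condition (L), restricted to `∏_j Γ_j`
    (hL : ∀ (k : Fin N) (x x' : ∀ j, Λ j),
      x ∈ Set.univ.pi Γloc → x' ∈ Set.univ.pi Γloc → (∀ j, j ≠ k → x j = x' j) →
      |f x - f x'| ≤ c k)
    (t : ℝ) (ht : 0 ≤ t) :
    Measure.pi P {x | f x ≥ (∫ y, f y ∂(Measure.pi P)) + t +
        s * (Measure.pi P (Set.univ.pi Γloc)ᶜ).toReal ∧ x ∈ Set.univ.pi Γloc} ≤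
      ENNReal.ofReal (Real.exp (-2 * t ^ 2 / ∑ k, c k ^ 2)) := by
  obtain ⟨γ, hγ⟩ := nonempty_of_measure_ne_zero hpos.ne'
  set g := fun x ↦ f (piRetraction Γloc γ x)
  have hg : Measurable g := hf.comp (measurable_piRetraction hΓloc)
  have hgf : Set.EqOn g f (Set.univ.pi Γloc) := fun x hx ↦ by simp only [g, piRetraction_of_mem hx]
  have hbound (x) : |f x| ≤ |f γ| + s := by linarith [abs_sub_abs_le_abs_sub (f x) (f γ), hs x γ]
  have hmean : ∫ x, g x ∂Measure.pi P ≤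
      ∫ x, f x ∂Measure.pi P + s * (Measure.pi P (Set.univ.pi Γloc)ᶜ).toReal :=
    integral_le_integral_add_of_eqOn (MeasurableSet.univ_pi hΓloc)
      (Integrable.of_bound hf.aestronglyMeasurable _ (ae_of_all _ hbound))
      (Integrable.of_bound hg.aestronglyMeasurable _ (ae_of_all _ fun x ↦ hbound _))
      hgf fun x ↦ (le_abs_self _).trans (hs _ _)
  have hsub : {x | f x ≥ (∫ y, f y ∂(Measure.pi P)) + t +
      s * (Measure.pi P (Set.univ.pi Γloc)ᶜ).toReal ∧ x ∈ Set.univ.pi Γloc} ⊆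
      {x | t ≤ g x - ∫ y, g y ∂Measure.pi P} := fun x ⟨hx, hxΓ⟩ ↦ by
    show t ≤ g x - _
    rw [hgf hxΓ]
    linarith
  have hsg := (hasBoundedDifferences_comp_piRetraction hγ hL).hasSubgaussianMGF_pi P hg
  have hparam : ((∑ k, (‖c k‖₊ / 2) ^ 2 : ℝ≥0) : ℝ) = (∑ k, c k ^ 2) / 4 := by
    push_cast
    simp only [Real.norm_eq_abs, sq_abs, div_pow, Finset.sum_div]
    norm_num
  calc _ ≤ Measure.pi P {x | t ≤ g x - ∫ y, g y ∂Measure.pi P} := measure_mono hsub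
    _ = ENNReal.ofReal ((Measure.pi P).real {x | t ≤ g x - ∫ y, g y ∂Measure.pi P}) :=
      (ofReal_measureReal (measure_ne_top _ _)).symm
    _ ≤ _ := by
      refine ENNReal.ofReal_le_ofReal ((hsg.measure_ge_le ht).trans_eq ?_)
      rw [hparam]
      ring_nf
end

section
/- Bounded differences martingale inequality with random accumulative bounds. Let (F_k)_{0≤k≤N} be an increasing sequence of σ-algebras and (M_k)_{0≤k≤N} an (F_k)-adapted bounded martingale. Let L_k and U_k be F_{k−1}-measurable random variables satisfying L_k ≤ M_k − M_{k−1} ≤ U_k almost surely, and set S_k = Σ_{i∈[k]} (U_i − L_i)². Then for every t ≥ 0 and S > 0, P(M_k ≥ M_0 + t and S_k ≤ S for some k ∈ [N]) ≤ exp(−2t²/S). -/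
/-!
With `c = 4t/S`, the process `Z k = exp (c (M k - M 0) - c²/8 ∑_{i ∈ [k]} (U i - L i)²)`, frozen at
time `N`, is a nonnegative supermartingale with `Z 0 = 1`: given `F_{k-1}` the increment
`M k - M (k-1)` has mean zero and lies in the `F_{k-1}`-measurable interval `[L k, U k]`, so
Hoeffding's lemma bounds its conditional moment generating function by `exp (c² (U k - L k)² / 8)`.
On the event in question some `Z k` with `k ≤ N` is at least `exp (c t - c² S / 8) = exp (2t²/S)`,
and optional stopping at the first such `k` bounds its probability by `exp (-2t²/S)`.
-/

open Real MeasureTheory ProbabilityTheory Filter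

lemma sub_div_sub_mul_sub_cancel {l u x : ℝ} (hlx : l ≤ x) (hxu : x ≤ u) :
    (x - l) / (u - l) * (u - l) = x - l :=
  div_mul_cancel_of_imp fun h => by linarith

lemma exp_mul_le_add_slope_mul {l u x : ℝ} (hlx : l ≤ x) (hxu : x ≤ u) (c : ℝ) :
    exp (c * x) ≤ exp (c * l) + (exp (c * u) - exp (c * l)) / (u - l) * (x - l) := by
  set θ := (x - l) / (u - l)
  have hθ : θ * (u - l) = x - l := sub_div_sub_mul_sub_cancel hlx hxu
  have hθ0 : 0 ≤ θ := div_nonneg (by linarith) (by linarith)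
  have hθ1 : θ ≤ 1 := div_le_one_of_le₀ (by linarith) (by linarith)
  have hconv := convexOn_exp.2 (Set.mem_univ (c * l)) (Set.mem_univ (c * u))
    (sub_nonneg.2 hθ1) hθ0 (by ring)
  simp only [smul_eq_mul] at hconv
  calc exp (c * x) = exp ((1 - θ) * (c * l) + θ * (c * u)) := by
        congr 1; linear_combination (-c) * hθ
    _ ≤ (1 - θ) * exp (c * l) + θ * exp (c * u) := hconv
    _ = _ := by simp only [θ]; ring

lemma ae_mem_Icc_bernoulliMeasure {l u : ℝ} (hlu : l ≤ u) (p : unitInterval) :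
    ∀ᵐ x ∂Ber(u, l, p), x ∈ Set.Icc l u := by
  rw [ae_iff]
  exact bernoulliMeasure_apply_of_notMem_of_notMem p measurableSet_Icc.compl
    (by simpa using hlu) (by simpa using hlu)

-- The left-hand side is the moment generating function at `c` of the mean-zero law on `{l, u}`.
lemma exp_mul_sub_slope_mul_le {l u : ℝ} (hl : l ≤ 0) (hu : 0 ≤ u) (c : ℝ) :
    exp (c * l) - (exp (c * u) - exp (c * l)) / (u - l) * l ≤
      exp (c ^ 2 * (u - l) ^ 2 / 8) := by
  have hlu : l ≤ u := hl.trans hu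
  let p : unitInterval := ⟨(0 - l) / (u - l), div_nonneg (by linarith) (by linarith),
    div_le_one_of_le₀ (by linarith) (by linarith)⟩
  have hmean : ∫ x, x ∂Ber(u, l, p) = 0 := by
    rw [integral_bernoulliMeasure, smul_eq_mul, smul_eq_mul]
    linear_combination sub_div_sub_mul_sub_cancel hl hu
  have hoeffding := (hasSubgaussianMGF_of_mem_Icc_of_integral_eq_zero aemeasurable_id
    (ae_mem_Icc_bernoulliMeasure hlu p) hmean).mgf_le c
  rw [mgf, integral_bernoulliMeasure] at hoeffding
  convert hoeffding using 1
  · simp only [id, smul_eq_mul, p]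
    ring
  · congr 1
    push_cast
    rw [Real.norm_eq_abs, div_pow, sq_abs]
    ring

lemma exp_mul_le_exp_abs_mul {x K : ℝ} (hx : |x| ≤ K) (c : ℝ) : exp (c * x) ≤ exp (|c| * K) :=
  exp_le_exp.2 <| (le_abs_self _).trans <| (abs_mul c x).trans_le <|
    mul_le_mul_of_nonneg_left hx (abs_nonneg c)

lemma abs_slope_mul_sub_le {l u x K : ℝ} (hl : |l| ≤ K) (hu : |u| ≤ K) (hlx : l ≤ x) (hxu : x ≤ u)
    (c : ℝ) : |(exp (c * u) - exp (c * l)) / (u - l) * (x - l)| ≤ 2 * exp (|c| * K) := by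
  have hθ : |(x - l) / (u - l)| ≤ 1 := by
    rw [abs_of_nonneg (div_nonneg (by linarith) (by linarith))]
    exact div_le_one_of_le₀ (by linarith) (by linarith)
  calc |(exp (c * u) - exp (c * l)) / (u - l) * (x - l)|
      = |exp (c * u) - exp (c * l)| * |(x - l) / (u - l)| := by
        rw [← abs_mul]; congr 1; ring
    _ ≤ |exp (c * u) - exp (c * l)| := mul_le_of_le_one_right (abs_nonneg _) hθ
    _ ≤ exp (c * u) + exp (c * l) := by
        rw [abs_le]; constructor <;> linarith [exp_pos (c * u), exp_pos (c * l)]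
    _ ≤ 2 * exp (|c| * K) := by
        linarith [exp_mul_le_exp_abs_mul hu c, exp_mul_le_exp_abs_mul hl c]

section ConditionalHoeffding

variable {Ω : Type*} {m m0 : MeasurableSpace Ω} {P : Measure Ω} [IsFiniteMeasure P]
  {D L U : Ω → ℝ} {K : ℝ}

lemma ae_le_condExp_of_ae_le (hm : m ≤ m0) (hL : StronglyMeasurable[m] L)
    (hLint : Integrable L P) (hDint : Integrable D P) (hLD : L ≤ᵐ[P] D) : L ≤ᵐ[P] P[D|m] := by
  have hmono := condExp_mono (m := m) hLint hDint hLD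
  rwa [condExp_of_stronglyMeasurable hm hL hLint] at hmono

lemma ae_nonpos_nonneg_of_condExp_eq_zero (hm : m ≤ m0) (hL : StronglyMeasurable[m] L)
    (hU : StronglyMeasurable[m] U) (hLint : Integrable L P) (hUint : Integrable U P)
    (hDint : Integrable D P) (hLDU : ∀ᵐ ω ∂P, L ω ≤ D ω ∧ D ω ≤ U ω) (hD0 : P[D|m] =ᵐ[P] 0) :
    ∀ᵐ ω ∂P, L ω ≤ 0 ∧ 0 ≤ U ω := by
  filter_upwards [ae_le_condExp_of_ae_le hm hL hLint hDint (hLDU.mono fun _ h => h.1),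
    ae_le_condExp_of_ae_le hm hU.neg hUint.neg hDint.neg (hLDU.mono fun _ h => neg_le_neg h.2),
    condExp_neg D m, hD0] with ω hL0 hU0 hneg h0
  simp only [Pi.neg_apply, hneg, h0, Pi.zero_apply, neg_zero, neg_nonpos] at hL0 hU0
  exact ⟨hL0, hU0⟩

theorem condExp_exp_mul_le_of_abs_le (hm : m ≤ m0) (hD : AEStronglyMeasurable D P)
    (hL : StronglyMeasurable[m] L) (hU : StronglyMeasurable[m] U)
    (hLK : ∀ ω, |L ω| ≤ K) (hUK : ∀ ω, |U ω| ≤ K)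
    (hLDU : ∀ᵐ ω ∂P, L ω ≤ D ω ∧ D ω ≤ U ω) (hD0 : P[D|m] =ᵐ[P] 0) (c : ℝ) :
    P[fun ω => exp (c * D ω)|m] ≤ᵐ[P] fun ω => exp (c ^ 2 * (U ω - L ω) ^ 2 / 8) := by
  -- `exp (c ·)` lies below its chord over `[L, U]`; conditioning evaluates the chord at
  -- `P[D|m] = 0`, where it is the two-point moment generating function.
  have hDK : ∀ᵐ ω ∂P, |D ω| ≤ K := hLDU.mono fun ω h =>
    abs_le.2 ⟨(abs_le.1 (hLK ω)).1.trans h.1, h.2.trans (abs_le.1 (hUK ω)).2⟩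
  have hLint : Integrable L P := .of_bound (hL.mono hm).aestronglyMeasurable K (ae_of_all _ hLK)
  have hDint : Integrable D P := .of_bound hD K hDK
  have hUint : Integrable U P := .of_bound (hU.mono hm).aestronglyMeasurable K (ae_of_all _ hUK)
  set s : Ω → ℝ := fun ω => (exp (c * U ω) - exp (c * L ω)) / (U ω - L ω)
  have hs : StronglyMeasurable[m] s := by
    have := hL.measurable; have := hU.measurable
    exact Measurable.stronglyMeasurable (by fun_prop)
  have hexpL : StronglyMeasurable[m] fun ω => exp (c * L ω) := by
    have := hL.measurable
    exact Measurable.stronglyMeasurable (by fun_prop)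
  have hsDL : Integrable (s * (D - L)) P := by
    refine .of_bound ((hs.mono hm).aestronglyMeasurable.mul
      (hD.sub (hL.mono hm).aestronglyMeasurable)) (2 * exp (|c| * K)) ?_
    filter_upwards [hLDU] with ω h
    exact abs_slope_mul_sub_le (hLK ω) (hUK ω) h.1 h.2 c
  have hexpLint : Integrable (fun ω => exp (c * L ω)) P :=
    integrable_exp_mul_of_mem_Icc (hL.mono hm).measurable.aemeasurable
      (ae_of_all _ fun ω => abs_le.1 (hLK ω))
  have hexpDint : Integrable (fun ω => exp (c * D ω)) P :=
    integrable_exp_mul_of_mem_Icc hD.aemeasurable (hDK.mono fun _ h => abs_le.1 h)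
  have hchord : (fun ω => exp (c * D ω)) ≤ᵐ[P] (fun ω => exp (c * L ω)) + s * (D - L) :=
    hLDU.mono fun ω h => exp_mul_le_add_slope_mul h.1 h.2 c
  have hcond : P[(fun ω => exp (c * L ω)) + s * (D - L)|m] =ᵐ[P]
      fun ω => exp (c * L ω) - s ω * L ω := by
    filter_upwards [condExp_add hexpLint hsDL m,
      condExp_mul_of_stronglyMeasurable_left hs hsDL (hDint.sub hLint),
      condExp_sub hDint hLint m, hD0] with ω hadd hmul hsub h0
    rw [hadd, Pi.add_apply, condExp_of_stronglyMeasurable hm hexpL hexpLint, hmul, Pi.mul_apply,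
      hsub, Pi.sub_apply, h0, condExp_of_stronglyMeasurable hm hL hLint]
    simp only [Pi.zero_apply]; ring
  filter_upwards [condExp_mono hexpDint (hexpLint.add hsDL) hchord, hcond,
    ae_nonpos_nonneg_of_condExp_eq_zero hm hL hU hLint hUint hDint hLDU hD0] with ω hmono heq hLU
  exact (hmono.trans_eq heq).trans (exp_mul_sub_slope_mul_le hLU.1 hLU.2 c)

theorem condExp_exp_mul_le (hm : m ≤ m0) (hD : AEStronglyMeasurable D P) (hDK : ∀ ω, |D ω| ≤ K)
    (hL : StronglyMeasurable[m] L) (hU : StronglyMeasurable[m] U)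
    (hLDU : ∀ᵐ ω ∂P, L ω ≤ D ω ∧ D ω ≤ U ω) (hD0 : P[D|m] =ᵐ[P] 0) (c : ℝ) :
    P[fun ω => exp (c * D ω)|m] ≤ᵐ[P] fun ω => exp (c ^ 2 * (U ω - L ω) ^ 2 / 8) := by
  -- Clamping `L` and `U` to `[-K, K]` keeps them on either side of `D` and can only shrink `U - L`.
  let clamp : ℝ → ℝ := fun x => max (min x K) (-K)
  have hclamp_abs (x : ℝ) : |clamp x| ≤ |K| := abs_le.2
    ⟨(neg_le_neg (le_abs_self K)).trans (le_max_right _ _),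
      max_le ((min_le_right _ _).trans (le_abs_self K)) (neg_le_abs K)⟩
  have hclamp_D (ω : Ω) : clamp (D ω) = D ω := by
    obtain ⟨h₁, h₂⟩ := abs_le.1 (hDK ω)
    simp only [clamp, min_eq_left h₂, max_eq_left h₁]
  have hclamp_mono : Monotone clamp := fun _ _ h => max_le_max (min_le_min_right _ h) le_rfl
  have hclamp_sq (x y : ℝ) : (clamp x - clamp y) ^ 2 ≤ (x - y) ^ 2 :=
    sq_le_sq.2 <| (abs_max_sub_max_le_abs _ _ _).trans <|
      (abs_min_sub_min_le_max _ _ _ _).trans_eq (by simp)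
  have hclamp_meas {f : Ω → ℝ} (hf : StronglyMeasurable[m] f) :
      StronglyMeasurable[m] fun ω => clamp (f ω) :=
    ((hf.measurable.min measurable_const).max measurable_const).stronglyMeasurable
  have hLDU' : ∀ᵐ ω ∂P, clamp (L ω) ≤ D ω ∧ D ω ≤ clamp (U ω) := hLDU.mono fun ω h =>
    ⟨(hclamp_mono h.1).trans_eq (hclamp_D ω), (hclamp_D ω).symm.trans_le (hclamp_mono h.2)⟩
  filter_upwards [condExp_exp_mul_le_of_abs_le hm hD (hclamp_meas hL) (hclamp_meas hU)
    (fun ω => hclamp_abs _) (fun ω => hclamp_abs _) hLDU' hD0 c] with ω h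
  exact h.trans <| exp_le_exp.2 <| div_le_div_of_nonneg_right
    (mul_le_mul_of_nonneg_left (hclamp_sq _ _) (sq_nonneg c)) (by norm_num)

end ConditionalHoeffding

lemma MeasureTheory.Martingale.condExp_sub_ae_eq_zero {Ω : Type*} {m0 : MeasurableSpace Ω}
    {P : Measure Ω} [IsFiniteMeasure P] {ℱ : Filtration ℕ m0} {M : ℕ → Ω → ℝ}
    (hM : Martingale M ℱ P) (k : ℕ) :
    P[M (k + 1) - M k|ℱ k] =ᵐ[P] 0 := by
  filter_upwards [condExp_sub (hM.integrable (k + 1)) (hM.integrable k) (ℱ k),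
    hM.condExp_ae_eq k.le_succ] with ω hsub hsucc
  rw [hsub, Pi.sub_apply, hsucc,
    condExp_of_stronglyMeasurable (ℱ.le k) (hM.stronglyAdapted k) (hM.integrable k), sub_self,
    Pi.zero_apply]

-- Ville's maximal inequality on `[0, N]`.
theorem MeasureTheory.Supermartingale.mul_measureReal_exists_le_le_integral {Ω : Type*}
    {m0 : MeasurableSpace Ω} {μ : Measure Ω} [IsFiniteMeasure μ] {ℱ : Filtration ℕ m0}
    {Z : ℕ → Ω → ℝ}
    (hZ : Supermartingale Z ℱ μ) (hZ_nonneg : ∀ k ω, 0 ≤ Z k ω) {a : ℝ} (ha : 0 ≤ a) (N : ℕ) :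
    a * μ.real {ω | ∃ k ≤ N, a ≤ Z k ω} ≤ ∫ ω, Z 0 ω ∂μ := by
  let τ : Ω → WithTop ℕ := fun ω => (hittingBtwn Z (Set.Ici a) 0 N ω : ℕ)
  have hτ : IsStoppingTime ℱ τ :=
    hZ.stronglyAdapted.adapted.isStoppingTime_hittingBtwn measurableSet_Ici
  have hτN (ω : Ω) : τ ω ≤ N := WithTop.coe_le_coe.2 (hittingBtwn_le ω)
  have hZτ : Integrable (stoppedValue Z τ) μ := integrable_stoppedValue ℕ hτ hZ.integrable hτN
  have hsubset : {ω | ∃ k ≤ N, a ≤ Z k ω} ⊆ {ω | a ≤ stoppedValue Z τ ω} :=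
    fun ω ⟨k, hkN, hk⟩ => stoppedValue_hittingBtwn_mem ⟨k, ⟨Nat.zero_le k, hkN⟩, hk⟩
  have hoptional : ∫ ω, stoppedValue Z τ ω ∂μ ≤ ∫ ω, Z 0 ω ∂μ := by
    have h := hZ.neg.expected_stoppedValue_mono (isStoppingTime_const ℱ 0) hτ
      (fun ω => WithTop.coe_le_coe.2 (Nat.zero_le _)) hτN
    simp only [stoppedValue_const, stoppedValue_neg, Pi.neg_apply, integral_neg,
      neg_le_neg_iff] at h
    exact h
  calc a * μ.real {ω | ∃ k ≤ N, a ≤ Z k ω}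
      ≤ a * μ.real {ω | a ≤ stoppedValue Z τ ω} :=
        mul_le_mul_of_nonneg_left (measureReal_mono hsubset) ha
    _ ≤ ∫ ω, stoppedValue Z τ ω ∂μ :=
      mul_meas_ge_le_integral_of_nonneg (ae_of_all _ fun ω => hZ_nonneg _ ω) hZτ a
    _ ≤ ∫ ω, Z 0 ω ∂μ := hoptional

noncomputable def hoeffdingProcess {Ω : Type*} (c : ℝ) (M L U : ℕ → Ω → ℝ) (k : ℕ) (ω : Ω) : ℝ :=
  exp (c * (M k ω - M 0 ω) - c ^ 2 / 8 * ∑ i ∈ Finset.Icc 1 k, (U i ω - L i ω) ^ 2)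

section HoeffdingProcess

variable {Ω : Type*} {m0 : MeasurableSpace Ω} {P : Measure Ω} [IsFiniteMeasure P]
  {ℱ : Filtration ℕ m0} {M L U : ℕ → Ω → ℝ} {c R : ℝ} {N k : ℕ}

lemma hoeffdingProcess_pos (ω : Ω) : 0 < hoeffdingProcess c M L U k ω := exp_pos _

@[simp]
lemma hoeffdingProcess_zero : hoeffdingProcess c M L U 0 = 1 := by
  ext ω; simp [hoeffdingProcess]

lemma hoeffdingProcess_succ (ω : Ω) :
    hoeffdingProcess c M L U (k + 1) ω =
      hoeffdingProcess c M L U k ω * exp (-(c ^ 2 / 8) * (U (k + 1) ω - L (k + 1) ω) ^ 2) *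
        exp (c * (M (k + 1) ω - M k ω)) := by
  simp only [hoeffdingProcess, ← exp_add, Finset.sum_Icc_succ_top (Nat.le_add_left 1 k)]
  ring_nf

lemma hoeffdingProcess_le (hR : ∀ k ω, |M k ω| ≤ R) (ω : Ω) :
    hoeffdingProcess c M L U k ω ≤ exp (|c| * (2 * R)) := by
  have hsum : 0 ≤ c ^ 2 / 8 * ∑ i ∈ Finset.Icc 1 k, (U i ω - L i ω) ^ 2 :=
    mul_nonneg (by positivity) (Finset.sum_nonneg fun _ _ => sq_nonneg _)
  have hM : |M k ω - M 0 ω| ≤ 2 * R := (abs_sub _ _).trans (by linarith [hR k ω, hR 0 ω])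
  exact exp_le_exp.2 <| (sub_le_self _ hsum).trans <|
    (le_abs_self _).trans <| (abs_mul _ _).trans_le <| mul_le_mul_of_nonneg_left hM (abs_nonneg c)

lemma exp_mul_sub_le_hoeffdingProcess {t S : ℝ} (hc : 0 ≤ c) {ω : Ω}
    (ht : M 0 ω + t ≤ M k ω) (hS : ∑ i ∈ Finset.Icc 1 k, (U i ω - L i ω) ^ 2 ≤ S) :
    exp (c * t - c ^ 2 / 8 * S) ≤ hoeffdingProcess c M L U k ω := by
  unfold hoeffdingProcess
  gcongr
  linarith

lemma stronglyMeasurable_hoeffdingProcess (hM : StronglyAdapted ℱ M)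
    (hL : ∀ k, 1 ≤ k → k ≤ N → StronglyMeasurable[ℱ (k - 1)] (L k))
    (hU : ∀ k, 1 ≤ k → k ≤ N → StronglyMeasurable[ℱ (k - 1)] (U k)) (hkN : k ≤ N) :
    StronglyMeasurable[ℱ k] (hoeffdingProcess c M L U k) := by
  have hsum : Measurable[ℱ k] fun ω => ∑ i ∈ Finset.Icc 1 k, (U i ω - L i ω) ^ 2 := by
    refine Finset.measurable_sum _ fun i hi => ?_
    obtain ⟨hi₁, hik⟩ := Finset.mem_Icc.1 hi
    have hle : ℱ (i - 1) ≤ ℱ k := ℱ.mono (by omega)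
    exact (((hU i hi₁ (hik.trans hkN)).measurable.mono hle le_rfl).sub
      ((hL i hi₁ (hik.trans hkN)).measurable.mono hle le_rfl)).pow_const 2
  have hMk := (hM k).measurable
  have hM0 := ((hM 0).measurable.mono (ℱ.mono (Nat.zero_le k)) le_rfl)
  exact Measurable.stronglyMeasurable (by unfold hoeffdingProcess; fun_prop)

lemma condExp_hoeffdingProcess_succ_le (hM : Martingale M ℱ P) (hR : ∀ k ω, |M k ω| ≤ R)
    (hZ : StronglyMeasurable[ℱ k] (hoeffdingProcess c M L U k))
    (hL : StronglyMeasurable[ℱ k] (L (k + 1))) (hU : StronglyMeasurable[ℱ k] (U (k + 1)))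
    (hLU : ∀ᵐ ω ∂P, L (k + 1) ω ≤ M (k + 1) ω - M k ω ∧ M (k + 1) ω - M k ω ≤ U (k + 1) ω) :
    P[hoeffdingProcess c M L U (k + 1)|ℱ k] ≤ᵐ[P] hoeffdingProcess c M L U k := by
  set Y : Ω → ℝ := fun ω =>
    hoeffdingProcess c M L U k ω * exp (-(c ^ 2 / 8) * (U (k + 1) ω - L (k + 1) ω) ^ 2)
  have hY_nonneg (ω : Ω) : 0 ≤ Y ω := mul_nonneg (hoeffdingProcess_pos ω).le (exp_pos _).le
  have hY : StronglyMeasurable[ℱ k] Y := by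
    have := hZ.measurable; have := hL.measurable; have := hU.measurable
    exact Measurable.stronglyMeasurable (by fun_prop)
  have hY_le (ω : Ω) : ‖Y ω‖ ≤ exp (|c| * (2 * R)) := by
    rw [norm_of_nonneg (hY_nonneg ω)]
    refine (mul_le_of_le_one_right (hoeffdingProcess_pos ω).le (exp_le_one_iff.2 ?_)).trans
      (hoeffdingProcess_le hR ω)
    nlinarith [sq_nonneg c, sq_nonneg (U (k + 1) ω - L (k + 1) ω)]
  set D : Ω → ℝ := M (k + 1) - M k
  have hD : StronglyMeasurable D :=
    ((hM.stronglyAdapted (k + 1)).mono (ℱ.le _)).sub ((hM.stronglyAdapted k).mono (ℱ.le _))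
  have hDK (ω : Ω) : |D ω| ≤ 2 * R := (abs_sub _ _).trans (by linarith [hR (k + 1) ω, hR k ω])
  have hexpDint : Integrable (fun ω => exp (c * D ω)) P :=
    integrable_exp_mul_of_mem_Icc hD.measurable.aemeasurable (ae_of_all _ fun ω => abs_le.1 (hDK ω))
  rw [show hoeffdingProcess c M L U (k + 1) = Y * fun ω => exp (c * D ω) from
    funext hoeffdingProcess_succ]
  filter_upwards
    [condExp_stronglyMeasurable_mul_of_bound (ℱ.le k) hY hexpDint _ (ae_of_all _ hY_le),
    condExp_exp_mul_le (ℱ.le k) hD.aestronglyMeasurable hDK hL hU hLU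
      (hM.condExp_sub_ae_eq_zero k) c] with ω hmul hexp
  rw [hmul, Pi.mul_apply]
  calc Y ω * P[fun ω => exp (c * D ω)|ℱ k] ω
      ≤ Y ω * exp (c ^ 2 * (U (k + 1) ω - L (k + 1) ω) ^ 2 / 8) :=
        mul_le_mul_of_nonneg_left hexp (hY_nonneg ω)
    _ = hoeffdingProcess c M L U k ω := by
        rw [mul_assoc, ← exp_add, neg_mul, neg_add_eq_zero.2 (by ring), exp_zero, mul_one]

theorem supermartingale_hoeffdingProcess_min (hM : Martingale M ℱ P) (hR : ∀ k ω, |M k ω| ≤ R)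
    (hL : ∀ k, 1 ≤ k → k ≤ N → StronglyMeasurable[ℱ (k - 1)] (L k))
    (hU : ∀ k, 1 ≤ k → k ≤ N → StronglyMeasurable[ℱ (k - 1)] (U k))
    (hLU : ∀ k, 1 ≤ k → k ≤ N →
      ∀ᵐ ω ∂P, L k ω ≤ M k ω - M (k - 1) ω ∧ M k ω - M (k - 1) ω ≤ U k ω) (c : ℝ) :
    Supermartingale (fun k => hoeffdingProcess c M L U (min k N)) ℱ P := by
  have hmeas (k : ℕ) : StronglyMeasurable[ℱ k] (hoeffdingProcess c M L U (min k N)) :=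
    (stronglyMeasurable_hoeffdingProcess hM.stronglyAdapted hL hU (min_le_right k N)).mono
      (ℱ.mono (min_le_left k N))
  have hint (k : ℕ) : Integrable (hoeffdingProcess c M L U (min k N)) P :=
    .of_bound ((hmeas k).mono (ℱ.le k)).aestronglyMeasurable _ <| ae_of_all _ fun ω => by
      rw [norm_of_nonneg (hoeffdingProcess_pos ω).le]
      exact hoeffdingProcess_le hR ω
  refine supermartingale_nat hmeas hint fun k => ?_
  rcases lt_or_ge k N with hk | hk
  · simp only [min_eq_left hk.le, min_eq_left (Nat.succ_le_of_lt hk)]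
    exact condExp_hoeffdingProcess_succ_le hM hR
      (stronglyMeasurable_hoeffdingProcess hM.stronglyAdapted hL hU hk.le)
      (hL (k + 1) le_add_self hk) (hU (k + 1) le_add_self hk) (hLU (k + 1) le_add_self hk)
  · rw [show min (k + 1) N = min k N by omega,
      condExp_of_stronglyMeasurable (ℱ.le k) (hmeas k) (hint k)]

end HoeffdingProcess

/-- **Bounded differences martingale inequality** (Lemma 2.2 of Warnke), with random
accumulative bounds: `(M_k)_{0 ≤ k ≤ N}` is a bounded martingale for the filtration
`(F_k)`, `L_k ≤ M_k - M_{k-1} ≤ U_k` with `L_k, U_k` being `F_{k-1}`-measurable, and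
`S_k = ∑_{i ∈ [k]} (U_i - L_i)²`. -/
theorem bounded_differences_martingale {Ω : Type*} {m0 : MeasurableSpace Ω}
    {P : Measure Ω} [IsProbabilityMeasure P]
    (N : ℕ) (ℱ : Filtration ℕ m0)
    (M : ℕ → Ω → ℝ) (hM : Martingale M ℱ P)
    (hMbdd : ∃ R : ℝ, ∀ k ω, |M k ω| ≤ R)
    (L U : ℕ → Ω → ℝ)
    (hL : ∀ k, 1 ≤ k → k ≤ N → StronglyMeasurable[ℱ (k - 1)] (L k))
    (hU : ∀ k, 1 ≤ k → k ≤ N → StronglyMeasurable[ℱ (k - 1)] (U k))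
    (hLU : ∀ k, 1 ≤ k → k ≤ N →
      ∀ᵐ ω ∂P, L k ω ≤ M k ω - M (k - 1) ω ∧ M k ω - M (k - 1) ω ≤ U k ω)
    (t S : ℝ) (ht : 0 ≤ t) (hS : 0 < S) :
    P {ω | ∃ k, 1 ≤ k ∧ k ≤ N ∧ M k ω ≥ M 0 ω + t ∧
        ∑ i ∈ Finset.Icc 1 k, (U i ω - L i ω) ^ 2 ≤ S} ≤
      ENNReal.ofReal (Real.exp (-2 * t ^ 2 / S)) := by
  obtain ⟨R, hR⟩ := hMbdd
  set c := 4 * t / S with hc_def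
  set Z : ℕ → Ω → ℝ := fun k => hoeffdingProcess c M L U (min k N)
  have hZ : Supermartingale Z ℱ P := supermartingale_hoeffdingProcess_min hM hR hL hU hLU c
  -- `c` maximises `c * t - c ^ 2 / 8 * S`, and the maximum is `2 * t ^ 2 / S`.
  have hc : c * t - c ^ 2 / 8 * S = 2 * t ^ 2 / S := by
    rw [hc_def]; field_simp; ring
  have hsubset : {ω | ∃ k, 1 ≤ k ∧ k ≤ N ∧ M k ω ≥ M 0 ω + t ∧
      ∑ i ∈ Finset.Icc 1 k, (U i ω - L i ω) ^ 2 ≤ S} ⊆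
      {ω | ∃ k ≤ N, exp (2 * t ^ 2 / S) ≤ Z k ω} := by
    rintro ω ⟨k, -, hkN, hMk, hSk⟩
    refine ⟨k, hkN, ?_⟩
    rw [← hc]
    simpa only [Z, min_eq_left hkN] using
      exp_mul_sub_le_hoeffdingProcess (by positivity) hMk hSk
  have hmax := hZ.mul_measureReal_exists_le_le_integral (fun _ ω => (hoeffdingProcess_pos ω).le)
    (exp_pos (2 * t ^ 2 / S)).le N
  simp only [Z, Nat.zero_min, hoeffdingProcess_zero, Pi.one_apply, integral_const, probReal_univ,
    smul_eq_mul, mul_one] at hmax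
  rw [ENNReal.le_ofReal_iff_toReal_le (measure_ne_top _ _) (exp_pos _).le, ← measureReal_def,
    neg_mul, neg_div, exp_neg, inv_eq_one_div, le_div_iff₀' (exp_pos _)]
  exact (mul_le_mul_of_nonneg_left (measureReal_mono hsubset) (exp_pos _).le).trans hmax
end
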